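/- (Theorem 4.2.4) Let a < b be real numbers and let N < P be positive integers. For each n with N ≤ n ≤ P let sₙ : [a,b] → ℝ be gauge integrable over [a,b]. Suppose there exist a gauge δ on [a,b] and a real number M such that for every δ-fine tagged division D of [a,b] and every function n(I, x) assigning to each interval-point pair (I, x) = ([u,v], x) of D an integer in the range N ≤ n(I,x) ≤ P, one has Σ_{([u,v],x)∈D} s_{n(I,x)}(x)(v − u) ≥ M. Then the function x ↦ min_{N ≤ n ≤ P} sₙ(x) is gauge integrable over [a,b]. -/

import Mathlib

/-- A tagged division of `[a, b]`: points `a = u 0 < u 1 < ⋯ < u n = b`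
together with tags `t j ∈ [u j, u (j+1)]` for `j = 0, …, n-1`. -/
structure TaggedDiv (a b : ℝ) where
  n : ℕ
  u : ℕ → ℝ
  t : ℕ → ℝ
  n_pos : 0 < n
  left : u 0 = a
  right : u n = b
  mono : ∀ j < n, u j < u (j + 1)
  tag_mem : ∀ j < n, t j ∈ Set.Icc (u j) (u (j + 1))

/-- A tagged division is `δ`-fine if each interval `[u j, u (j+1)]` is contained in
`(t j - δ (t j), t j + δ (t j))`. -/
def TaggedDiv.IsFine {a b : ℝ} (δ : ℝ → ℝ) (D : TaggedDiv a b) : Prop :=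
  ∀ j < D.n,
    Set.Icc (D.u j) (D.u (j + 1)) ⊆ Set.Ioo (D.t j - δ (D.t j)) (D.t j + δ (D.t j))

/-- The Riemann sum of `f` over a tagged division. -/
noncomputable def TaggedDiv.riemannSum {a b : ℝ} (D : TaggedDiv a b) (f : ℝ → ℝ) : ℝ :=
  ∑ j ∈ Finset.range D.n, f (D.t j) * (D.u (j + 1) - D.u j)

/-- A gauge on `[a, b]`: a function positive at each point of `[a, b]`. -/
def IsGauge (a b : ℝ) (δ : ℝ → ℝ) : Prop :=
  ∀ x ∈ Set.Icc a b, 0 < δ x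

/-- `F` is the gauge (Henstock–Kurzweil) integral of `f` over `[a, b]`. -/
def HKIntegral (a b : ℝ) (f : ℝ → ℝ) (F : ℝ) : Prop :=
  ∀ ε > 0, ∃ δ : ℝ → ℝ, IsGauge a b δ ∧
    ∀ D : TaggedDiv a b, D.IsFine δ → |D.riemannSum f - F| < ε

set_option maxHeartbeats 1000000

namespace HK

open Finset

variable {a b : ℝ}

/-- General "pair sum" over a tagged division. -/
noncomputable def pairSum (D : TaggedDiv a b) (F : ℝ → ℝ → ℝ → ℝ) : ℝ :=
  ∑ j ∈ Finset.range D.n, F (D.t j) (D.u j) (D.u (j + 1))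

lemma riemannSum_eq_pairSum (D : TaggedDiv a b) (f : ℝ → ℝ) :
    D.riemannSum f = pairSum D (fun t u v => f t * (v - u)) := rfl

lemma u_mono (D : TaggedDiv a b) {i j : ℕ} (hij : i ≤ j) (hj : j ≤ D.n) :
    D.u i ≤ D.u j := by
  induction j with
  | zero => simp [Nat.le_zero.mp hij]
  | succ k ih =>
    rcases Nat.lt_or_ge i (k + 1) with h | h
    · exact le_trans (ih (Nat.lt_succ_iff.mp h) (le_trans (Nat.le_succ k) hj))
        (le_of_lt (D.mono k (by omega)))
    · have : i = k + 1 := le_antisymm hij h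
      simp [this]

lemma u_strict_mono (D : TaggedDiv a b) {i j : ℕ} (hij : i < j) (hj : j ≤ D.n) :
    D.u i < D.u j := by
  have h1 : D.u i ≤ D.u (j - 1) := u_mono D (by omega) (by omega)
  have h2 : D.u (j - 1) < D.u (j - 1 + 1) := D.mono _ (by omega)
  have : j - 1 + 1 = j := by omega
  rw [this] at h2
  exact lt_of_le_of_lt h1 h2

lemma u_mem (D : TaggedDiv a b) {j : ℕ} (hj : j ≤ D.n) : D.u j ∈ Set.Icc a b := by
  have h1 := u_mono D (Nat.zero_le j) hj
  have h2 := u_mono D hj (le_refl D.n)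
  rw [D.left] at h1
  rw [D.right] at h2
  exact ⟨h1, h2⟩

lemma t_mem (D : TaggedDiv a b) {j : ℕ} (hj : j < D.n) : D.t j ∈ Set.Icc a b := by
  obtain ⟨h1, h2⟩ := D.tag_mem j hj
  constructor
  · exact le_trans (u_mem D (le_of_lt hj)).1 h1
  · exact le_trans h2 (u_mem D hj).2

/-- Monotonicity of fineness in the gauge. -/
lemma isFine_mono {D : TaggedDiv a b} {γ γ' : ℝ → ℝ} (hD : D.IsFine γ)
    (h : ∀ x ∈ Set.Icc a b, γ x ≤ γ' x) : D.IsFine γ' := by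
  intro j hj x hx
  obtain ⟨h1, h2⟩ := hD j hj hx
  have ht := h _ (t_mem D hj)
  exact ⟨by linarith, by linarith⟩

lemma isGauge_mono {c d : ℝ} {δ : ℝ → ℝ} (h : IsGauge a b δ)
    (hsub : Set.Icc c d ⊆ Set.Icc a b) : IsGauge c d δ :=
  fun x hx => h x (hsub hx)

lemma isGauge_min {δ1 δ2 : ℝ → ℝ} (h1 : IsGauge a b δ1) (h2 : IsGauge a b δ2) :
    IsGauge a b (fun x => min (δ1 x) (δ2 x)) :=
  fun x hx => lt_min (h1 x hx) (h2 x hx)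

/-- The one-interval tagged division. -/
def single (c d τ : ℝ) (h : c < d) (ht : τ ∈ Set.Icc c d) : TaggedDiv c d where
  n := 1
  u := fun i => if i = 0 then c else d
  t := fun _ => τ
  n_pos := one_pos
  left := by simp
  right := by simp
  mono := by intro j hj; interval_cases j; simpa using h
  tag_mem := by intro j hj; interval_cases j; simpa using ht

@[simp] lemma single_u0 (c d τ : ℝ) (h ht) : (single c d τ h ht).u 0 = c := rfl
@[simp] lemma single_u1 (c d τ : ℝ) (h ht) : (single c d τ h ht).u 1 = d := rfl
@[simp] lemma single_t (c d τ : ℝ) (h ht) (j : ℕ) : (single c d τ h ht).t j = τ := rfl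
@[simp] lemma single_n (c d τ : ℝ) (h ht) : (single c d τ h ht).n = 1 := rfl

lemma pairSum_single (c d τ : ℝ) (h ht) (F : ℝ → ℝ → ℝ → ℝ) :
    pairSum (single c d τ h ht) F = F τ c d := by
  simp [pairSum, single]

lemma riemannSum_single (c d τ : ℝ) (h ht) (f : ℝ → ℝ) :
    (single c d τ h ht).riemannSum f = f τ * (d - c) := by
  rw [riemannSum_eq_pairSum, pairSum_single]

lemma isFine_single (c d τ : ℝ) (h ht) {γ : ℝ → ℝ}
    (hsub : Set.Icc c d ⊆ Set.Ioo (τ - γ τ) (τ + γ τ)) :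
    (single c d τ h ht).IsFine γ := by
  intro j hj
  simp only [single_n] at hj
  interval_cases j
  simpa [single, TaggedDiv.IsFine] using hsub

/-- Change the (propositionally equal) endpoints of a tagged division. -/
def copy (D : TaggedDiv a b) (a' b' : ℝ) (ha : a = a') (hb : b = b') : TaggedDiv a' b' :=
  { D with left := ha ▸ D.left, right := hb ▸ D.right }

@[simp] lemma copy_n (D : TaggedDiv a b) (a' b' ha hb) : (copy D a' b' ha hb).n = D.n := rfl
@[simp] lemma copy_u (D : TaggedDiv a b) (a' b' ha hb) : (copy D a' b' ha hb).u = D.u := rfl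
@[simp] lemma copy_t (D : TaggedDiv a b) (a' b' ha hb) : (copy D a' b' ha hb).t = D.t := rfl

lemma copy_isFine (D : TaggedDiv a b) (a' b' ha hb) (γ : ℝ → ℝ) (h : D.IsFine γ) :
    (copy D a' b' ha hb).IsFine γ := h

lemma copy_pairSum (D : TaggedDiv a b) (a' b' ha hb) (F : ℝ → ℝ → ℝ → ℝ) :
    pairSum (copy D a' b' ha hb) F = pairSum D F := rfl

lemma copy_riemannSum (D : TaggedDiv a b) (a' b' ha hb) (f : ℝ → ℝ) :
    (copy D a' b' ha hb).riemannSum f = D.riemannSum f := rfl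

end HK
namespace HK

variable {a b c : ℝ}

lemma sum_range_add' (G : ℕ → ℝ) (m k : ℕ) :
    ∑ j ∈ Finset.range (m + k), G j
      = ∑ j ∈ Finset.range m, G j + ∑ j ∈ Finset.range k, G (m + j) := by
  induction k with
  | zero => simp
  | succ k ih =>
    rw [show m + (k+1) = (m+k)+1 from rfl, Finset.sum_range_succ, ih,
      Finset.sum_range_succ]
    ring

/-- Concatenation of tagged divisions. -/
def concat (D1 : TaggedDiv a c) (D2 : TaggedDiv c b) : TaggedDiv a b where
  n := D1.n + D2.n
  u := fun i => if i ≤ D1.n then D1.u i else D2.u (i - D1.n)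
  t := fun j => if j < D1.n then D1.t j else D2.t (j - D1.n)
  n_pos := Nat.add_pos_left D1.n_pos _
  left := by simp [D1.left]
  right := by
    have h2 := D2.n_pos
    by_cases h : D1.n + D2.n ≤ D1.n
    · omega
    · simp only [if_neg h]
      rw [show D1.n + D2.n - D1.n = D2.n by omega, D2.right]
  mono := by
    intro j hj
    rcases Nat.lt_or_ge j D1.n with h | h
    · rw [if_pos (by omega : j ≤ D1.n), if_pos (by omega : j + 1 ≤ D1.n)]
      exact D1.mono j h
    · rcases Nat.eq_or_lt_of_le h with h' | h'
      · subst h'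
        have hcc : D1.u D1.n = D2.u 0 := by rw [D1.right, D2.left]
        rw [if_pos (le_refl D1.n), if_neg (show ¬ D1.n + 1 ≤ D1.n by omega),
          show D1.n + 1 - D1.n = 1 by omega, hcc]
        exact D2.mono 0 D2.n_pos
      · rw [if_neg (by omega), if_neg (by omega)]
        rw [show j + 1 - D1.n = (j - D1.n) + 1 by omega]
        exact D2.mono (j - D1.n) (by omega)
  tag_mem := by
    intro j hj
    rcases Nat.lt_or_ge j D1.n with h | h
    · rw [if_pos h, if_pos (by omega : j ≤ D1.n), if_pos (by omega : j + 1 ≤ D1.n)]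
      exact D1.tag_mem j h
    · rcases Nat.eq_or_lt_of_le h with h' | h'
      · subst h'
        have hcc : D1.u D1.n = D2.u 0 := by rw [D1.right, D2.left]
        rw [if_neg (lt_irrefl D1.n), if_pos (le_refl D1.n),
          if_neg (show ¬ D1.n + 1 ≤ D1.n by omega), show D1.n - D1.n = 0 by omega,
          show D1.n + 1 - D1.n = 1 by omega, hcc]
        exact D2.tag_mem 0 D2.n_pos
      · rw [if_neg (by omega), if_neg (by omega), if_neg (by omega)]
        rw [show j + 1 - D1.n = (j - D1.n) + 1 by omega]
        exact D2.tag_mem (j - D1.n) (by omega)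

@[simp] lemma concat_n (D1 : TaggedDiv a c) (D2 : TaggedDiv c b) :
    (concat D1 D2).n = D1.n + D2.n := rfl

lemma concat_u_left (D1 : TaggedDiv a c) (D2 : TaggedDiv c b) {i : ℕ} (h : i ≤ D1.n) :
    (concat D1 D2).u i = D1.u i := if_pos h

lemma concat_u_right (D1 : TaggedDiv a c) (D2 : TaggedDiv c b) (i : ℕ) :
    (concat D1 D2).u (D1.n + i) = D2.u i := by
  rcases Nat.eq_zero_or_pos i with h | h
  · subst h
    show (if D1.n + 0 ≤ D1.n then _ else _) = _
    rw [if_pos (by omega), show D1.n + 0 = D1.n from rfl, D1.right, D2.left]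
  · show (if D1.n + i ≤ D1.n then _ else _) = _
    rw [if_neg (by omega), show D1.n + i - D1.n = i by omega]

lemma concat_t_left (D1 : TaggedDiv a c) (D2 : TaggedDiv c b) {j : ℕ} (h : j < D1.n) :
    (concat D1 D2).t j = D1.t j := if_pos h

lemma concat_t_right (D1 : TaggedDiv a c) (D2 : TaggedDiv c b) (j : ℕ) :
    (concat D1 D2).t (D1.n + j) = D2.t j := by
  show (if D1.n + j < D1.n then _ else _) = _
  rw [if_neg (by omega), show D1.n + j - D1.n = j by omega]

lemma pairSum_concat (D1 : TaggedDiv a c) (D2 : TaggedDiv c b) (F : ℝ → ℝ → ℝ → ℝ) :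
    pairSum (concat D1 D2) F = pairSum D1 F + pairSum D2 F := by
  unfold pairSum
  rw [concat_n, sum_range_add']
  congr 1
  · apply Finset.sum_congr rfl
    intro j hj
    rw [Finset.mem_range] at hj
    rw [concat_t_left _ _ hj, concat_u_left _ _ (by omega), concat_u_left _ _ (by omega)]
  · apply Finset.sum_congr rfl
    intro j hj
    rw [Finset.mem_range] at hj
    rw [concat_t_right, concat_u_right, show D1.n + j + 1 = D1.n + (j+1) from rfl,
      concat_u_right]

lemma riemannSum_concat (D1 : TaggedDiv a c) (D2 : TaggedDiv c b) (f : ℝ → ℝ) :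
    (concat D1 D2).riemannSum f = D1.riemannSum f + D2.riemannSum f := by
  rw [riemannSum_eq_pairSum, riemannSum_eq_pairSum, riemannSum_eq_pairSum, pairSum_concat]

lemma isFine_concat {D1 : TaggedDiv a c} {D2 : TaggedDiv c b} {γ : ℝ → ℝ}
    (h1 : D1.IsFine γ) (h2 : D2.IsFine γ) : (concat D1 D2).IsFine γ := by
  intro j hj
  rw [concat_n] at hj
  rcases Nat.lt_or_ge j D1.n with h | h
  · rw [concat_t_left _ _ h, concat_u_left _ _ (by omega : j ≤ D1.n),
      concat_u_left _ _ (by omega : j + 1 ≤ D1.n)]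
    exact h1 j h
  · obtain ⟨i, rfl⟩ : ∃ i, j = D1.n + i := ⟨j - D1.n, by omega⟩
    rw [concat_t_right, concat_u_right, show D1.n + i + 1 = D1.n + (i+1) from rfl,
      concat_u_right]
    exact h2 i (by omega)

end HK
namespace HK

variable {a b : ℝ}

/-- **Cousin's lemma**: every gauge admits a fine tagged division. -/
lemma cousin (a b : ℝ) (hab : a < b) (δ : ℝ → ℝ) (hδ : IsGauge a b δ) :
    ∃ D : TaggedDiv a b, D.IsFine δ := by
  classical
  set S : Set ℝ := {x | a < x ∧ x ≤ b ∧ ∃ D : TaggedDiv a x, D.IsFine δ} with hS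
  have hδa : 0 < δ a := hδ a ⟨le_refl a, le_of_lt hab⟩
  have hx0 : min b (a + δ a / 2) ∈ S := by
    have h1 : a < min b (a + δ a / 2) := lt_min hab (by linarith)
    refine ⟨h1, min_le_left _ _, ?_⟩
    refine ⟨single a _ a h1 ⟨le_refl a, le_of_lt h1⟩, ?_⟩
    apply isFine_single
    intro x hx
    constructor
    · have := hx.1; linarith
    · have := hx.2
      have : x ≤ a + δ a / 2 := le_trans hx.2 (min_le_right _ _)
      linarith
  have hne : S.Nonempty := ⟨_, hx0⟩
  have hbdd : BddAbove S := ⟨b, fun x hx => hx.2.1⟩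
  set c := sSup S with hc
  have hac : a < c := lt_of_lt_of_le hx0.1 (le_csSup hbdd hx0)
  have hcb : c ≤ b := csSup_le hne (fun x hx => hx.2.1)
  have hδc : 0 < δ c := hδ c ⟨le_of_lt hac, hcb⟩
  obtain ⟨x, hxS, hxc⟩ := exists_lt_of_lt_csSup hne (show c - δ c < c by linarith)
  have hxle : x ≤ c := le_csSup hbdd hxS
  obtain ⟨hax, hxb, D, hD⟩ := hxS
  by_cases hxb' : x = b
  · exact ⟨copy D a b rfl hxb', copy_isFine _ _ _ _ _ _ hD⟩
  · have hxb'' : x < b := lt_of_le_of_ne hxb hxb'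
    set y := min b (c + δ c / 2) with hy
    have hcy : c ≤ y := le_min hcb (by linarith)
    have hxy : x < y := by
      rcases lt_or_eq_of_le hxle with h | h
      · exact lt_of_lt_of_le h hcy
      · subst h
        exact lt_min hxb'' (by linarith)
    have htmem : c ∈ Set.Icc x y := ⟨hxle, hcy⟩
    have hfine : Set.Icc x y ⊆ Set.Ioo (c - δ c) (c + δ c) := by
      intro z hz
      constructor
      · have := hz.1; linarith
      · have : z ≤ c + δ c / 2 := le_trans hz.2 (min_le_right _ _)
        linarith
    set D' := concat D (single x y c hxy htmem) with hD'
    have hD'fine : D'.IsFine δ := isFine_concat hD (isFine_single _ _ _ _ _ hfine)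
    have hyS : y ∈ S := ⟨lt_trans hax hxy, min_le_left _ _, D', hD'fine⟩
    have hyc : y ≤ c := le_csSup hbdd hyS
    have hcbeq : c = b := by
      by_contra hne'
      have : c < b := lt_of_le_of_ne hcb hne'
      have : c < y := lt_min this (by linarith)
      linarith
    have hyb : y = b := by
      have hδb : 0 < δ b := hcbeq ▸ hδc
      rw [hy, hcbeq]
      exact min_eq_left (by linarith)
    exact ⟨copy D' a b rfl hyb, copy_isFine _ _ _ _ _ _ hD'fine⟩

/-- Uniqueness of the gauge integral. -/
lemma hk_unique {f : ℝ → ℝ} {F1 F2 : ℝ} (hab : a < b)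
    (h1 : HKIntegral a b f F1) (h2 : HKIntegral a b f F2) : F1 = F2 := by
  by_contra hne
  have hε : 0 < |F1 - F2| / 2 := by
    have : F1 - F2 ≠ 0 := sub_ne_zero.mpr hne
    have := abs_pos.mpr this
    linarith
  obtain ⟨γ1, hγ1, hp1⟩ := h1 _ hε
  obtain ⟨γ2, hγ2, hp2⟩ := h2 _ hε
  obtain ⟨D, hD⟩ := cousin a b hab _ (isGauge_min hγ1 hγ2)
  have hD1 : D.IsFine γ1 := isFine_mono hD (fun x _ => min_le_left _ _)
  have hD2 : D.IsFine γ2 := isFine_mono hD (fun x _ => min_le_right _ _)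
  have := hp1 D hD1
  have := hp2 D hD2
  have h := abs_sub_lt_iff.mp (hp1 D hD1)
  have h' := abs_sub_lt_iff.mp (hp2 D hD2)
  have := abs_sub_lt_iff.mpr (⟨by linarith [h.1, h'.2], by linarith [h.2, h'.1]⟩ :
    F1 - F2 < |F1 - F2| / 2 + |F1 - F2| / 2 ∧ F2 - F1 < |F1 - F2| / 2 + |F1 - F2| / 2)
  have habs : |F1 - F2| < |F1 - F2| := by linarith [this]
  exact absurd habs (lt_irrefl _)

end HK
namespace HK

variable {a b : ℝ}

/-- Cauchy criterion for gauge integrability. -/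
lemma cauchy_criterion (hab : a < b) (f : ℝ → ℝ)
    (h : ∀ ε > 0, ∃ γ : ℝ → ℝ, IsGauge a b γ ∧
      ∀ D1 D2 : TaggedDiv a b, D1.IsFine γ → D2.IsFine γ →
        |D1.riemannSum f - D2.riemannSum f| < ε) :
    ∃ F, HKIntegral a b f F := by
  classical
  choose γ hγ hcau using fun k : ℕ => h (1 / (k + 1)) (by positivity)
  have hne : ∀ k : ℕ, (Finset.range (k + 1)).Nonempty :=
    fun k => Finset.nonempty_range_iff.mpr (Nat.succ_ne_zero k)
  set Γ : ℕ → ℝ → ℝ := fun k x => (Finset.range (k + 1)).inf' (hne k) (fun i => γ i x)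
    with hΓ
  have hΓg : ∀ k, IsGauge a b (Γ k) := by
    intro k x hx
    rw [hΓ]
    simp only [Finset.lt_inf'_iff]
    exact fun i _ => hγ i x hx
  have hΓle : ∀ k i, i ≤ k → ∀ x, Γ k x ≤ γ i x := by
    intro k i hik x
    exact Finset.inf'_le _ (Finset.mem_range.mpr (by omega))
  have hD : ∀ k : ℕ, ∃ D : TaggedDiv a b, D.IsFine (Γ k) :=
    fun k => cousin a b hab _ (hΓg k)
  choose D hDf using hD
  set F : ℕ → ℝ := fun k => (D k).riemannSum f with hF
  have key : ∀ k l, k ≤ l → |F k - F l| < 1 / (k + 1) := by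
    intro k l hkl
    apply hcau k
    · exact isFine_mono (hDf k) (fun x _ => hΓle k k le_rfl x)
    · exact isFine_mono (hDf l) (fun x _ => hΓle l k hkl x)
  have hcs : CauchySeq F := by
    rw [Metric.cauchySeq_iff']
    intro ε hε
    obtain ⟨N, hN⟩ := exists_nat_one_div_lt hε
    refine ⟨N, fun n hn => ?_⟩
    rw [Real.dist_eq]
    calc |F n - F N| = |F N - F n| := abs_sub_comm _ _
      _ < 1 / (N + 1) := key N n hn
      _ < ε := hN
  obtain ⟨L, hL⟩ := cauchySeq_tendsto_of_complete hcs
  refine ⟨L, fun ε hε => ?_⟩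
  obtain ⟨k, hk⟩ := exists_nat_one_div_lt (show (0:ℝ) < ε / 2 by linarith)
  obtain ⟨N, hN⟩ := (Metric.tendsto_atTop.mp hL) (ε / 2 - 1 / (k+1))
    (by linarith)
  set l := max k N with hl
  refine ⟨Γ k, hΓg k, fun E hE => ?_⟩
  have h1 : |E.riemannSum f - F l| < 1 / (k + 1) := by
    apply hcau k
    · exact isFine_mono hE (fun x _ => hΓle k k le_rfl x)
    · exact isFine_mono (hDf l) (fun x _ => hΓle l k (le_max_left _ _) x)
  have h2 : |F l - L| < ε / 2 - 1/(k+1) := by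
    have := hN l (le_max_right _ _)
    rwa [Real.dist_eq] at this
  calc |E.riemannSum f - L| ≤ |E.riemannSum f - F l| + |F l - L| := abs_sub_le _ _ _
    _ < 1 / (k+1) + (ε / 2 - 1/(k+1)) := by linarith
    _ = ε / 2 := by ring
    _ < ε := by linarith
end HK
namespace HK

variable {a b : ℝ}

lemma tag_forced {γ : ℝ → ℝ} {D : TaggedDiv a b} (hD : D.IsFine γ) (c : ℝ)
    (hγc : ∀ x ∈ Set.Icc a b, x ≠ c → γ x ≤ |x - c|) :
    ∀ j, j < D.n → D.u j ≤ c → c ≤ D.u (j + 1) → D.t j = c := by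
  intro j hj h1 h2
  by_contra hne
  have hc := hD j hj ⟨h1, h2⟩
  have ht : D.t j ∈ Set.Icc a b := t_mem D hj
  have hle := hγc _ ht hne
  have habs : |D.t j - c| < γ (D.t j) := by
    rw [abs_sub_lt_iff]
    exact ⟨by linarith [hc.1, hc.2], by linarith [hc.1, hc.2]⟩
  linarith

/-- Split a tagged division at a point `c` which tags every interval containing it. -/
lemma splitAtTag (D : TaggedDiv a b) (c : ℝ) (hac : a < c) (hcb : c < b)
    (htag : ∀ j, j < D.n → D.u j ≤ c → c ≤ D.u (j + 1) → D.t j = c) :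
    ∃ (D1 : TaggedDiv a c) (D2 : TaggedDiv c b),
      (∀ f : ℝ → ℝ, D.riemannSum f = D1.riemannSum f + D2.riemannSum f) ∧
      (∀ γ : ℝ → ℝ, D.IsFine γ → D1.IsFine γ ∧ D2.IsFine γ) := by
  classical
  have hn0 := D.n_pos
  have hex : ∃ j, c ≤ D.u (j + 1) := by
    refine ⟨D.n - 1, ?_⟩
    rw [show D.n - 1 + 1 = D.n by omega, D.right]
    exact le_of_lt hcb
  set J := Nat.find hex with hJ
  have hJspec : c ≤ D.u (J + 1) := Nat.find_spec hex
  have hJn : J < D.n := by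
    have : J ≤ D.n - 1 := Nat.find_le (by
      rw [show D.n - 1 + 1 = D.n by omega, D.right]; exact le_of_lt hcb)
    omega
  have huJ : D.u J < c := by
    rcases Nat.eq_zero_or_pos J with h0 | h0
    · rw [h0, D.left]; exact hac
    · have := Nat.find_min hex (show J - 1 < J by omega)
      rw [show J - 1 + 1 = J by omega] at this
      exact lt_of_not_ge this
  rcases eq_or_lt_of_le hJspec with heq | hlt
  · -- c is a division point
    have hJn' : J + 1 < D.n := by
      by_contra h
      have : J + 1 = D.n := by omega
      rw [this, D.right] at heq
      exact absurd heq.symm (ne_of_gt hcb)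
    refine ⟨⟨J + 1, D.u, D.t, Nat.succ_pos J, D.left, heq.symm,
        fun j hj => D.mono j (by omega), fun j hj => D.tag_mem j (by omega)⟩,
      ⟨D.n - (J + 1), fun i => D.u (J + 1 + i), fun i => D.t (J + 1 + i), by omega,
        by show D.u (J + 1 + 0) = c; rw [Nat.add_zero]; exact heq.symm,
        by show D.u (J + 1 + (D.n - (J + 1))) = b
           rw [show J + 1 + (D.n - (J + 1)) = D.n by omega, D.right],
        fun i hi => D.mono (J + 1 + i) (by omega),
        fun i hi => D.tag_mem (J + 1 + i) (by omega)⟩, ?_, ?_⟩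
    · intro f
      have h := sum_range_add' (fun j => f (D.t j) * (D.u (j + 1) - D.u j)) (J + 1)
        (D.n - (J + 1))
      rw [show J + 1 + (D.n - (J + 1)) = D.n by omega] at h
      exact h
    · intro γ hγ
      constructor
      · intro j hj
        have hj' : j < J + 1 := hj
        exact hγ j (by omega)
      · intro i hi
        have hi' : i < D.n - (J + 1) := hi
        exact hγ (J + 1 + i) (by omega)
  · -- c is interior to interval J; its tag is c
    have htJ : D.t J = c := htag J hJn (le_of_lt huJ) (le_of_lt hlt)
    refine ⟨⟨J + 1, fun i => if i ≤ J then D.u i else c, D.t, Nat.succ_pos J,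
        by show (if 0 ≤ J then D.u 0 else c) = a
           rw [if_pos (Nat.zero_le J)]; exact D.left,
        by show (if J + 1 ≤ J then D.u (J + 1) else c) = c
           rw [if_neg (by omega)], ?_, ?_⟩,
      ⟨D.n - J, fun i => if i = 0 then c else D.u (J + i),
        fun i => if i = 0 then c else D.t (J + i), by omega,
        by show (if (0:ℕ) = 0 then c else D.u (J + 0)) = c
           rw [if_pos rfl],
        by show (if D.n - J = 0 then c else D.u (J + (D.n - J))) = b
           rw [if_neg (by omega), show J + (D.n - J) = D.n by omega, D.right], ?_, ?_⟩,
      ?_, ?_⟩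
    · -- D1 mono
      intro j hj
      try dsimp only
      rcases Nat.lt_or_ge j J with h | h
      · rw [if_pos (by omega : j ≤ J), if_pos (by omega : j + 1 ≤ J)]
        exact D.mono j (by omega)
      · have hjJ : j = J := by omega
        subst hjJ
        rw [if_pos (le_refl J), if_neg (by omega)]
        exact huJ
    · -- D1 tag_mem
      intro j hj
      try dsimp only
      rcases Nat.lt_or_ge j J with h | h
      · rw [if_pos (by omega : j ≤ J), if_pos (by omega : j + 1 ≤ J)]
        exact D.tag_mem j (by omega)
      · have hjJ : j = J := by omega
        subst hjJ
        rw [if_pos (le_refl J), if_neg (by omega), htJ]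
        exact ⟨le_of_lt huJ, le_refl c⟩
    · -- D2 mono
      intro i hi
      try dsimp only
      rcases Nat.eq_zero_or_pos i with h0 | h0
      · subst h0
        rw [if_pos rfl, if_neg (by omega)]
        exact hlt
      · rw [if_neg (by omega), if_neg (by omega)]
        exact D.mono (J + i) (by omega)
    · -- D2 tag_mem
      intro i hi
      try dsimp only
      rcases Nat.eq_zero_or_pos i with h0 | h0
      · subst h0
        rw [if_pos rfl, if_pos rfl, if_neg (by omega)]
        exact ⟨le_refl c, le_of_lt hlt⟩
      · rw [if_neg (by omega), if_neg (by omega), if_neg (by omega)]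
        exact D.tag_mem (J + i) (by omega)
    · -- sums
      intro f
      simp only [TaggedDiv.riemannSum]
      try dsimp only
      rw [Finset.sum_range_succ]
      have e1 : ∀ j ∈ Finset.range J,
          f (D.t j) * ((if j + 1 ≤ J then D.u (j + 1) else c)
            - (if j ≤ J then D.u j else c))
          = f (D.t j) * (D.u (j + 1) - D.u j) := by
        intro j hj
        rw [Finset.mem_range] at hj
        rw [if_pos (by omega : j + 1 ≤ J), if_pos (by omega : j ≤ J)]
      rw [Finset.sum_congr rfl e1]
      rw [if_pos (le_refl J), if_neg (by omega : ¬ J + 1 ≤ J)]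
      have h2 := Finset.sum_range_succ'
        (fun i => (if i = 0 then f c else f (D.t (J + i)))
          * ((if i + 1 = 0 then c else D.u (J + (i + 1)))
            - (if i = 0 then c else D.u (J + i)))) (D.n - J - 1)
      rw [show D.n - J - 1 + 1 = D.n - J by omega] at h2
      have e2 : ∀ (i : ℕ),
          (if i = 0 then f c else f (D.t (J + i)))
            * ((if i + 1 = 0 then c else D.u (J + (i + 1)))
              - (if i = 0 then c else D.u (J + i)))
          = (if i = 0 then f c else f (D.t (J + i)))
            * ((if i + 1 = 0 then c else D.u (J + (i + 1)))
              - (if i = 0 then c else D.u (J + i))) := fun i => rfl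
      -- rewrite the D2 sum
      have hD2sum : (∑ i ∈ Finset.range (D.n - J),
          f (if i = 0 then c else D.t (J + i))
            * ((if i + 1 = 0 then c else D.u (J + (i + 1)))
              - (if i = 0 then c else D.u (J + i))))
          = (∑ i ∈ Finset.range (D.n - J - 1),
              f (D.t (J + i + 1)) * (D.u (J + i + 1 + 1) - D.u (J + i + 1)))
            + f c * (D.u (J + 1) - c) := by
        have h3 := Finset.sum_range_succ'
          (fun i => f (if i = 0 then c else D.t (J + i))
            * ((if i + 1 = 0 then c else D.u (J + (i + 1)))
              - (if i = 0 then c else D.u (J + i)))) (D.n - J - 1)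
        rw [show D.n - J - 1 + 1 = D.n - J by omega] at h3
        rw [h3]
        congr 1 <;> try apply Finset.sum_congr rfl
        all_goals simp
      rw [hD2sum]
      have hLHS : (∑ j ∈ Finset.range D.n, f (D.t j) * (D.u (j + 1) - D.u j))
          = (∑ j ∈ Finset.range J, f (D.t j) * (D.u (j + 1) - D.u j))
            + ((∑ i ∈ Finset.range (D.n - J - 1),
                f (D.t (J + i + 1)) * (D.u (J + i + 1 + 1) - D.u (J + i + 1)))
              + f (D.t J) * (D.u (J + 1) - D.u J)) := by
        have h := sum_range_add' (fun j => f (D.t j) * (D.u (j + 1) - D.u j)) J (D.n - J)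
        rw [show J + (D.n - J) = D.n by omega] at h
        rw [h]
        congr 1
        have h4 := Finset.sum_range_succ'
          (fun i => f (D.t (J + i)) * (D.u (J + i + 1) - D.u (J + i))) (D.n - J - 1)
        rw [show D.n - J - 1 + 1 = D.n - J by omega] at h4
        rw [h4]
        rfl
      rw [hLHS, htJ]
      ring
    · -- fineness
      intro γ hγ
      constructor
      · intro j hj x hx
        have hj' : j < J + 1 := hj
        try dsimp only at hx ⊢
        rcases Nat.lt_or_ge j J with h | h
        · rw [if_pos (by omega : j ≤ J), if_pos (by omega : j + 1 ≤ J)] at hx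
          exact hγ j (by omega) hx
        · have hjJ : j = J := by omega
          subst hjJ
          rw [if_pos (le_refl J), if_neg (by omega)] at hx
          exact hγ J (by omega) ⟨hx.1, le_trans hx.2 (le_of_lt hlt)⟩
      · intro i hi x hx
        have hi' : i < D.n - J := hi
        try dsimp only at hx ⊢
        rcases Nat.eq_zero_or_pos i with h0 | h0
        · subst h0
          norm_num at hx ⊢
          have hmem : x ∈ Set.Icc (D.u J) (D.u (J + 1)) :=
            ⟨le_trans (le_of_lt huJ) hx.1, hx.2⟩
          have := hγ J (by omega) hmem
          rwa [htJ] at this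
        · rw [if_neg (by omega), if_neg (by omega)] at hx
          rw [if_neg (by omega)]
          exact hγ (J + i) (by omega) hx

end HK
namespace HK

variable {a b : ℝ}

/-- Additivity of the gauge integral over adjacent intervals. -/
lemma hk_add {f : ℝ → ℝ} {c X Y : ℝ} (hac : a < c) (hcb : c < b)
    (hX : HKIntegral a c f X) (hY : HKIntegral c b f Y) :
    HKIntegral a b f (X + Y) := by
  intro ε hε
  obtain ⟨γ1, hγ1, hp1⟩ := hX (ε / 2) (by linarith)
  obtain ⟨γ2, hγ2, hp2⟩ := hY (ε / 2) (by linarith)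
  classical
  refine ⟨fun x => if x < c then min (γ1 x) (c - x)
      else if c < x then min (γ2 x) (x - c) else min (γ1 c) (γ2 c), ?_, ?_⟩
  · intro x hx
    by_cases h1 : x < c
    · have hm : x ∈ Set.Icc a c := ⟨hx.1, le_of_lt h1⟩
      simp only [if_pos h1]
      exact lt_min (hγ1 x hm) (by linarith)
    · by_cases h2 : c < x
      · have : x ∈ Set.Icc c b := ⟨le_of_lt h2, hx.2⟩
        simp only [if_neg h1, if_pos h2]
        exact lt_min (hγ2 x this) (by linarith)
      · simp only [if_neg h1, if_neg h2]
        exact lt_min (hγ1 c ⟨le_of_lt hac, le_refl c⟩) (hγ2 c ⟨le_refl c, le_of_lt hcb⟩)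
  · intro D hD
    set γ : ℝ → ℝ := fun x => if x < c then min (γ1 x) (c - x)
      else if c < x then min (γ2 x) (x - c) else min (γ1 c) (γ2 c) with hγdef
    have hforce : ∀ x ∈ Set.Icc a b, x ≠ c → γ x ≤ |x - c| := by
      intro x _ hne
      simp only [hγdef]
      rcases lt_trichotomy x c with h | h | h
      · rw [if_pos h, abs_of_neg (by linarith : x - c < 0)]
        exact le_trans (min_le_right _ _) (by linarith)
      · exact absurd h hne
      · rw [if_neg (by linarith), if_pos h, abs_of_pos (by linarith : 0 < x - c)]
        exact min_le_right _ _
    obtain ⟨D1, D2, hsum, hfine⟩ := splitAtTag D c hac hcb (tag_forced hD c hforce)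
    obtain ⟨hf1, hf2⟩ := hfine γ hD
    have hD1 : D1.IsFine γ1 := by
      refine isFine_mono hf1 ?_
      intro x hx
      simp only [hγdef]
      rcases lt_or_eq_of_le hx.2 with h | h
      · rw [if_pos h]; exact min_le_left _ _
      · rw [h]
        rw [if_neg (lt_irrefl c), if_neg (lt_irrefl c)]
        exact min_le_left _ _
    have hD2 : D2.IsFine γ2 := by
      refine isFine_mono hf2 ?_
      intro x hx
      simp only [hγdef]
      rcases lt_or_eq_of_le hx.1 with h | h
      · rw [if_neg (by linarith : ¬ x < c), if_pos h]; exact min_le_left _ _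
      · rw [h]
        rw [if_neg (lt_irrefl x), if_neg (lt_irrefl x)]
        exact min_le_right _ _
    have h1 := hp1 D1 hD1
    have h2 := hp2 D2 hD2
    rw [hsum f]
    rw [abs_sub_lt_iff] at h1 h2 ⊢
    constructor <;> [skip; skip] <;> linarith [h1.1, h1.2, h2.1, h2.2]

/-- Integrability on subintervals. -/
lemma hk_sub {f : ℝ → ℝ} {F : ℝ} (hab : a < b) (hf : HKIntegral a b f F) {c d : ℝ}
    (hac : a ≤ c) (hcd : c < d) (hdb : d ≤ b) : ∃ G, HKIntegral c d f G := by
  apply cauchy_criterion hcd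
  intro ε hε
  obtain ⟨γ, hγ, hp⟩ := hf (ε / 2) (by linarith)
  refine ⟨γ, isGauge_mono hγ (Set.Icc_subset_Icc hac hdb), ?_⟩
  intro D1 D2 h1 h2
  have key : ∀ (E1 E2 : TaggedDiv a b), E1.IsFine γ → E2.IsFine γ →
      ∀ r : ℝ, E1.riemannSum f = D1.riemannSum f + r → E2.riemannSum f = D2.riemannSum f + r →
      |D1.riemannSum f - D2.riemannSum f| < ε := by
    intro E1 E2 hE1 hE2 r hr1 hr2
    have q1 := hp E1 hE1
    have q2 := hp E2 hE2
    rw [hr1] at q1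
    rw [hr2] at q2
    rw [abs_sub_lt_iff] at q1 q2 ⊢
    constructor <;> linarith [q1.1, q1.2, q2.1, q2.2]
  rcases eq_or_lt_of_le hac with hac' | hac'
  · rcases eq_or_lt_of_le hdb with hdb' | hdb'
    · -- c = a, d = b
      exact key (copy D1 a b hac'.symm hdb') (copy D2 a b hac'.symm hdb')
        (copy_isFine _ _ _ _ _ _ h1) (copy_isFine _ _ _ _ _ _ h2) 0
        (by rw [copy_riemannSum]; ring) (by rw [copy_riemannSum]; ring)
    · -- c = a, d < b
      obtain ⟨R, hR⟩ := cousin d b hdb' γ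
        (isGauge_mono hγ (Set.Icc_subset_Icc (by linarith) le_rfl))
      exact key (concat (copy D1 a d hac'.symm rfl) R) (concat (copy D2 a d hac'.symm rfl) R)
        (isFine_concat (copy_isFine _ _ _ _ _ _ h1) hR)
        (isFine_concat (copy_isFine _ _ _ _ _ _ h2) hR)
        (R.riemannSum f)
        (by rw [riemannSum_concat, copy_riemannSum])
        (by rw [riemannSum_concat, copy_riemannSum])
  · rcases eq_or_lt_of_le hdb with hdb' | hdb'
    · -- a < c, d = b
      obtain ⟨L, hL⟩ := cousin a c hac' γ
        (isGauge_mono hγ (Set.Icc_subset_Icc le_rfl (by linarith)))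
      exact key (concat L (copy D1 c b rfl hdb')) (concat L (copy D2 c b rfl hdb'))
        (isFine_concat hL (copy_isFine _ _ _ _ _ _ h1))
        (isFine_concat hL (copy_isFine _ _ _ _ _ _ h2))
        (L.riemannSum f)
        (by rw [riemannSum_concat, copy_riemannSum]; ring)
        (by rw [riemannSum_concat, copy_riemannSum]; ring)
    · -- a < c, d < b
      obtain ⟨L, hL⟩ := cousin a c hac' γ
        (isGauge_mono hγ (Set.Icc_subset_Icc le_rfl (by linarith)))
      obtain ⟨R, hR⟩ := cousin d b hdb' γ
        (isGauge_mono hγ (Set.Icc_subset_Icc (by linarith) le_rfl))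
      exact key (concat (concat L D1) R) (concat (concat L D2) R)
        (isFine_concat (isFine_concat hL h1) hR)
        (isFine_concat (isFine_concat hL h2) hR)
        (L.riemannSum f + R.riemannSum f)
        (by rw [riemannSum_concat, riemannSum_concat]; ring)
        (by rw [riemannSum_concat, riemannSum_concat]; ring)

/-- Existence of a primitive (indefinite integral) function. -/
lemma exists_prim {f : ℝ → ℝ} {F : ℝ} (hab : a < b) (hf : HKIntegral a b f F) :
    ∃ Ψ : ℝ → ℝ, (Ψ b - Ψ a = F) ∧
      ∀ u v, a ≤ u → u < v → v ≤ b → HKIntegral u v f (Ψ v - Ψ u) := by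
  classical
  have hI : ∀ v, a < v → v ≤ b → ∃ G, HKIntegral a v f G :=
    fun v h1 h2 => hk_sub hab hf le_rfl h1 h2
  choose! I hIs using hI
  refine ⟨fun x => if a < x then I x else 0, ?_, ?_⟩
  · simp only [if_pos hab, if_neg (lt_irrefl a)]
    have : HKIntegral a b f (I b) := hIs b hab le_rfl
    rw [hk_unique hab this hf]
    ring
  · intro u v hau huv hvb
    have hav : a < v := lt_of_le_of_lt hau huv
    rcases eq_or_lt_of_le hau with hau' | hau'
    · subst hau'
      simp only [if_pos hav, if_neg (lt_irrefl a)]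
      simpa using hIs v hav hvb
    · simp only [if_pos hav, if_pos hau']
      obtain ⟨G, hG⟩ := hk_sub hab hf (le_of_lt hau') huv hvb
      have hsum : HKIntegral a v f (I u + G) :=
        hk_add hau' huv (hIs u hau' (by linarith)) hG
      have hv : HKIntegral a v f (I v) := hIs v hav hvb
      have : I v = I u + G := hk_unique hav hv hsum
      rw [this]
      simpa using hG

end HK
namespace HK

variable {a b : ℝ}

/-- Glue per-interval divisions into a refinement of `D`. -/
lemma glue (D : TaggedDiv a b) (parts : ∀ j, j < D.n → TaggedDiv (D.u j) (D.u (j + 1))) :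
    ∃ R : TaggedDiv a b,
      (∀ F : ℝ → ℝ → ℝ → ℝ,
        pairSum R F = ∑ j ∈ Finset.range D.n,
          (if h : j < D.n then pairSum (parts j h) F else 0)) ∧
      (∀ γ : ℝ → ℝ, (∀ j (h : j < D.n), (parts j h).IsFine γ) → R.IsFine γ) ∧
      (∀ j (h : j < D.n), ∀ i ≤ (parts j h).n,
        ∃ i', i' ≤ R.n ∧ R.u i' = (parts j h).u i) := by
  classical
  have aux : ∀ m, 0 < m → m ≤ D.n → ∃ R : TaggedDiv (D.u 0) (D.u m),
      (∀ F : ℝ → ℝ → ℝ → ℝ,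
        pairSum R F = ∑ j ∈ Finset.range m,
          (if h : j < D.n then pairSum (parts j h) F else 0)) ∧
      (∀ γ : ℝ → ℝ, (∀ j (h : j < D.n), (parts j h).IsFine γ) → R.IsFine γ) ∧
      (∀ j (h : j < D.n), j < m → ∀ i ≤ (parts j h).n,
        ∃ i', i' ≤ R.n ∧ R.u i' = (parts j h).u i) := by
    intro m
    induction m with
    | zero => intro h; omega
    | succ m ih =>
      intro _ hmn
      rcases Nat.eq_zero_or_pos m with h0 | h0
      · subst h0
        refine ⟨parts 0 (by omega), ?_, ?_, ?_⟩
        · intro F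
          rw [Finset.sum_range_one, dif_pos (by omega : 0 < D.n)]
        · intro γ hγ
          exact hγ 0 (by omega)
        · intro j h hj i hi
          have hj0 : j = 0 := by omega
          subst hj0
          exact ⟨i, hi, rfl⟩
      · obtain ⟨R', hsum', hfine', hmem'⟩ := ih h0 (by omega)
        refine ⟨concat R' (parts m (by omega)), ?_, ?_, ?_⟩
        · intro F
          rw [pairSum_concat, hsum', Finset.sum_range_succ, dif_pos (by omega : m < D.n)]
        · intro γ hγ
          exact isFine_concat (hfine' γ hγ) (hγ m (by omega))
        · intro j h hj i hi
          rcases Nat.lt_or_ge j m with hjm | hjm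
          · obtain ⟨i', hi', hval⟩ := hmem' j h hjm i hi
            refine ⟨i', by simp only [concat_n]; omega, ?_⟩
            rw [concat_u_left _ _ hi', hval]
          · have hjm' : j = m := by omega
            subst hjm'
            refine ⟨R'.n + i, by simp only [concat_n]; omega, ?_⟩
            rw [concat_u_right]
  obtain ⟨R0, hsum, hfine, hmem⟩ := aux D.n D.n_pos le_rfl
  refine ⟨copy R0 a b D.left D.right, ?_, ?_, ?_⟩
  · intro F; rw [copy_pairSum]; exact hsum F
  · intro γ hγ; exact copy_isFine _ _ _ _ _ _ (hfine γ hγ)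
  · intro j h i hi
    obtain ⟨i', hi', hval⟩ := hmem j h h i hi
    exact ⟨i', hi', hval⟩

/-- Saks–Henstock: partial sums over a subset of a fine division. -/
lemma saks_henstock {f : ℝ → ℝ} {Ψ : ℝ → ℝ} (hab : a < b)
    (hΨ : ∀ u v, a ≤ u → u < v → v ≤ b → HKIntegral u v f (Ψ v - Ψ u))
    {γ : ℝ → ℝ} (hγ : IsGauge a b γ) {ε : ℝ}
    (hful : ∀ D : TaggedDiv a b, D.IsFine γ → |D.riemannSum f - (Ψ b - Ψ a)| < ε)
    (D : TaggedDiv a b) (hD : D.IsFine γ) (E : Finset ℕ) (hE : E ⊆ Finset.range D.n)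
    {η : ℝ} (hη : 0 < η) :
    |∑ j ∈ E, (f (D.t j) * (D.u (j + 1) - D.u j) - (Ψ (D.u (j + 1)) - Ψ (D.u j)))|
      < ε + η := by
  classical
  have hn0 : (0:ℝ) < D.n := by exact_mod_cast D.n_pos
  have hpart : ∀ j, j < D.n → ∃ P : TaggedDiv (D.u j) (D.u (j + 1)),
      P.IsFine γ ∧
      (j ∈ E → P.riemannSum f = f (D.t j) * (D.u (j + 1) - D.u j)) ∧
      (j ∉ E → |P.riemannSum f - (Ψ (D.u (j + 1)) - Ψ (D.u j))| < η / D.n) := by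
    intro j hj
    by_cases hjE : j ∈ E
    · refine ⟨single (D.u j) (D.u (j + 1)) (D.t j) (D.mono j hj) (D.tag_mem j hj),
        isFine_single _ _ _ _ _ (hD j hj), ?_, ?_⟩
      · intro _
        rw [riemannSum_single]
      · intro h; exact absurd hjE h
    · have hint := hΨ (D.u j) (D.u (j + 1)) (u_mem D (le_of_lt hj)).1 (D.mono j hj)
        (u_mem D hj).2
      obtain ⟨γ', hγ', hp'⟩ := hint (η / D.n) (by positivity)
      have hγsub : IsGauge (D.u j) (D.u (j + 1)) γ :=
        isGauge_mono hγ (Set.Icc_subset_Icc (u_mem D (le_of_lt hj)).1 (u_mem D hj).2)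
      obtain ⟨P, hP⟩ := cousin (D.u j) (D.u (j + 1)) (D.mono j hj) _
        (isGauge_min hγsub hγ')
      refine ⟨P, isFine_mono hP (fun x _ => min_le_left _ _), fun h => absurd h hjE, ?_⟩
      intro _
      exact hp' P (isFine_mono hP (fun x _ => min_le_right _ _))
  choose parts hPfine hPE hPnE using hpart
  obtain ⟨R, hRsum, hRfine, _⟩ := glue D parts
  have hRf : R.IsFine γ := hRfine γ hPfine
  have hRiem : R.riemannSum f = ∑ j ∈ Finset.range D.n,
      (if h : j < D.n then (parts j h).riemannSum f else 0) := by
    rw [riemannSum_eq_pairSum, hRsum]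
    apply Finset.sum_congr rfl
    intro j hj
    rw [Finset.mem_range] at hj
    rw [dif_pos hj, dif_pos hj, riemannSum_eq_pairSum]
  have htel : ∑ j ∈ Finset.range D.n, (Ψ (D.u (j + 1)) - Ψ (D.u j)) = Ψ b - Ψ a := by
    rw [Finset.sum_range_sub (fun i => Ψ (D.u i)), D.left, D.right]
  have hfull := hful R hRf
  rw [hRiem, ← htel] at hfull
  rw [← Finset.sum_sub_distrib] at hfull
  set T : ℕ → ℝ := fun j =>
    (if h : j < D.n then (parts j h).riemannSum f else 0) - (Ψ (D.u (j + 1)) - Ψ (D.u j))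
    with hT
  set G : ℕ → ℝ := fun j =>
    f (D.t j) * (D.u (j + 1) - D.u j) - (Ψ (D.u (j + 1)) - Ψ (D.u j)) with hG
  have hTE : ∀ j ∈ E, T j = G j := by
    intro j hj
    have hjn := Finset.mem_range.mp (hE hj)
    simp only [hT, hG, dif_pos hjn, hPE j hjn hj]
  have hsplit : ∑ j ∈ E, G j
      = ∑ j ∈ Finset.range D.n, T j - ∑ j ∈ Finset.range D.n \ E, T j := by
    rw [← Finset.sum_sdiff hE]
    rw [Finset.sum_congr rfl hTE]
    ring
  have hbound : |∑ j ∈ Finset.range D.n \ E, T j| ≤ η := by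
    calc |∑ j ∈ Finset.range D.n \ E, T j| ≤ ∑ j ∈ Finset.range D.n \ E, |T j| :=
          Finset.abs_sum_le_sum_abs _ _
      _ ≤ ∑ j ∈ Finset.range D.n \ E, (η / D.n) := by
          apply Finset.sum_le_sum
          intro j hj
          have hjn := Finset.mem_range.mp (Finset.mem_sdiff.mp hj).1
          have hjE := (Finset.mem_sdiff.mp hj).2
          have := hPnE j hjn hjE
          simp only [hT, dif_pos hjn]
          exact le_of_lt this
      _ = (Finset.range D.n \ E).card * (η / D.n) := by
          rw [Finset.sum_const, nsmul_eq_mul]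
      _ ≤ D.n * (η / D.n) := by
          apply mul_le_mul_of_nonneg_right _ (by positivity)
          have : (Finset.range D.n \ E).card ≤ (Finset.range D.n).card :=
            Finset.card_le_card (Finset.sdiff_subset)
          rw [Finset.card_range] at this
          exact_mod_cast this
      _ = η := by field_simp
  rw [hsplit]
  calc |∑ j ∈ Finset.range D.n, T j - ∑ j ∈ Finset.range D.n \ E, T j|
      ≤ |∑ j ∈ Finset.range D.n, T j| + |∑ j ∈ Finset.range D.n \ E, T j| :=
        abs_sub _ _
    _ < ε + η := by
        apply add_lt_add_of_lt_of_le _ hbound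
        exact hfull

end HK
namespace HK

variable {a b : ℝ}

/-- Absolute-value version of Saks–Henstock. -/
lemma saks_henstock_abs {f : ℝ → ℝ} {Ψ : ℝ → ℝ} (hab : a < b)
    (hΨ : ∀ u v, a ≤ u → u < v → v ≤ b → HKIntegral u v f (Ψ v - Ψ u))
    {γ : ℝ → ℝ} (hγ : IsGauge a b γ) {ε : ℝ}
    (hful : ∀ D : TaggedDiv a b, D.IsFine γ → |D.riemannSum f - (Ψ b - Ψ a)| < ε)
    (D : TaggedDiv a b) (hD : D.IsFine γ) (E : Finset ℕ) (hE : E ⊆ Finset.range D.n)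
    {η : ℝ} (hη : 0 < η) :
    ∑ j ∈ E, |f (D.t j) * (D.u (j + 1) - D.u j) - (Ψ (D.u (j + 1)) - Ψ (D.u j))|
      ≤ 2 * (ε + η) := by
  classical
  set G : ℕ → ℝ := fun j =>
    f (D.t j) * (D.u (j + 1) - D.u j) - (Ψ (D.u (j + 1)) - Ψ (D.u j)) with hG
  set Ep := E.filter (fun j => 0 ≤ G j) with hEp
  set Em := E.filter (fun j => ¬ 0 ≤ G j) with hEm
  have h1 : ∑ j ∈ E, |G j| = ∑ j ∈ Ep, G j + ∑ j ∈ Em, (- G j) := by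
    rw [← Finset.sum_filter_add_sum_filter_not E (fun j => 0 ≤ G j) (fun j => |G j|)]
    congr 1
    · apply Finset.sum_congr rfl
      intro j hj
      exact abs_of_nonneg (Finset.mem_filter.mp hj).2
    · apply Finset.sum_congr rfl
      intro j hj
      exact abs_of_neg (lt_of_not_ge (Finset.mem_filter.mp hj).2)
  have hp := saks_henstock hab hΨ hγ hful D hD Ep
    (le_trans (Finset.filter_subset _ _) hE) hη
  have hm := saks_henstock hab hΨ hγ hful D hD Em
    (le_trans (Finset.filter_subset _ _) hE) hη
  rw [h1]
  have h2 : ∑ j ∈ Ep, G j ≤ |∑ j ∈ Ep, G j| := le_abs_self _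
  have h3 : ∑ j ∈ Em, (- G j) ≤ |∑ j ∈ Em, G j| := by
    calc ∑ j ∈ Em, (- G j) = - ∑ j ∈ Em, G j := by rw [Finset.sum_neg_distrib]
      _ ≤ |(- ∑ j ∈ Em, G j)| := le_abs_self _
      _ = |∑ j ∈ Em, G j| := abs_neg _
  have := hp
  linarith [hp, hm, h2, h3]

/-- Extend a single fine tagged interval to a fine tagged division of `[a, b]`. -/
lemma extendToFull {γ : ℝ → ℝ} (hab : a < b) (hγ : IsGauge a b γ) {u v p : ℝ}
    (hau : a ≤ u) (huv : u < v) (hvb : v ≤ b) (hp : p ∈ Set.Icc u v)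
    (hfine : Set.Icc u v ⊆ Set.Ioo (p - γ p) (p + γ p)) :
    ∃ (D : TaggedDiv a b) (j : ℕ), j < D.n ∧ D.IsFine γ ∧
      D.u j = u ∧ D.u (j + 1) = v ∧ D.t j = p := by
  have hSfine : (single u v p huv hp).IsFine γ := isFine_single _ _ _ _ _ hfine
  rcases eq_or_lt_of_le hau with hau' | hau'
  · rcases eq_or_lt_of_le hvb with hvb' | hvb'
    · exact ⟨copy (single u v p huv hp) a b hau'.symm hvb', 0, Nat.one_pos,
        copy_isFine _ _ _ _ _ _ hSfine, rfl, rfl, rfl⟩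
    · obtain ⟨R, hR⟩ := cousin v b hvb' γ
        (isGauge_mono hγ (Set.Icc_subset_Icc (by linarith) le_rfl))
      refine ⟨concat (copy (single u v p huv hp) a v hau'.symm rfl) R, 0, ?_, ?_, ?_, ?_, ?_⟩
      · simp only [concat_n, copy_n, single_n]; omega
      · exact isFine_concat (copy_isFine _ _ _ _ _ _ hSfine) hR
      · exact concat_u_left _ _ (by simp)
      · exact concat_u_left _ _ (by simp)
      · exact concat_t_left _ _ (by simp)
  · rcases eq_or_lt_of_le hvb with hvb' | hvb'
    · obtain ⟨L, hL⟩ := cousin a u hau' γ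
        (isGauge_mono hγ (Set.Icc_subset_Icc le_rfl (by linarith)))
      refine ⟨concat L (copy (single u v p huv hp) u b rfl hvb'), L.n, ?_, ?_, ?_, ?_, ?_⟩
      · simp only [concat_n, copy_n, single_n]; omega
      · exact isFine_concat hL (copy_isFine _ _ _ _ _ _ hSfine)
      · have := concat_u_right L (copy (single u v p huv hp) u b rfl hvb') 0
        rw [Nat.add_zero] at this
        rw [this]; rfl
      · exact concat_u_right L _ 1
      · have := concat_t_right L (copy (single u v p huv hp) u b rfl hvb') 0
        rw [Nat.add_zero] at this
        rw [this]; rfl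
    · obtain ⟨L, hL⟩ := cousin a u hau' γ
        (isGauge_mono hγ (Set.Icc_subset_Icc le_rfl (by linarith)))
      obtain ⟨R, hR⟩ := cousin v b hvb' γ
        (isGauge_mono hγ (Set.Icc_subset_Icc (by linarith) le_rfl))
      set X := concat L (single u v p huv hp) with hX
      refine ⟨concat X R, L.n, ?_, ?_, ?_, ?_, ?_⟩
      · simp only [concat_n, single_n, hX]; omega
      · exact isFine_concat (isFine_concat hL hSfine) hR
      · rw [concat_u_left X R (by simp [hX, concat_n])]
        have := concat_u_right L (single u v p huv hp) 0
        rw [Nat.add_zero] at this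
        rw [hX, this]
        rfl
      · rw [concat_u_left X R (by simp [hX, concat_n])]
        rw [hX]
        exact concat_u_right L _ 1
      · rw [concat_t_left X R (by simp [hX, concat_n])]
        have := concat_t_right L (single u v p huv hp) 0
        rw [Nat.add_zero] at this
        rw [hX, this]
        rfl

/-- Continuity of the primitive near a point. -/
lemma prim_cont {f : ℝ → ℝ} {Ψ : ℝ → ℝ} (hab : a < b)
    (hΨ : ∀ u v, a ≤ u → u < v → v ≤ b → HKIntegral u v f (Ψ v - Ψ u))
    (p : ℝ) (hpab : p ∈ Set.Icc a b) {η : ℝ} (hη : 0 < η) :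
    ∃ ρ : ℝ, 0 < ρ ∧ ∀ u v, a ≤ u → u ≤ p → p ≤ v → v ≤ b → u < v → v - u < ρ →
      |Ψ v - Ψ u| < η := by
  obtain ⟨γ, hγ, hful⟩ := hΨ a b le_rfl hab le_rfl (η / 8) (by linarith)
  refine ⟨min (γ p) (η / (8 * (|f p| + 1))), lt_min (hγ p hpab) (by positivity), ?_⟩
  intro u v hau hup hpv hvb huv hρ
  have hρ1 : v - u < γ p := lt_of_lt_of_le hρ (min_le_left _ _)
  have hρ2 : v - u < η / (8 * (|f p| + 1)) := lt_of_lt_of_le hρ (min_le_right _ _)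
  have hsub : Set.Icc u v ⊆ Set.Ioo (p - γ p) (p + γ p) := by
    intro x hx
    constructor
    · have : u ≤ x := hx.1
      have : x - p ≥ u - v := by linarith [hx.1, hpv]
      linarith
    · have : x - p ≤ v - u := by linarith [hx.2, hup]
      linarith
  obtain ⟨D, j, hjn, hDf, hu, hv, ht⟩ := extendToFull hab hγ hau huv hvb ⟨hup, hpv⟩ hsub
  have hsh := saks_henstock hab hΨ hγ hful D hDf {j} (by simp [Finset.mem_range, hjn])
    (show (0:ℝ) < η / 8 by linarith)
  rw [Finset.sum_singleton, hu, hv, ht] at hsh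
  have habs : |Ψ v - Ψ u| ≤ |f p * (v - u)| + |f p * (v - u) - (Ψ v - Ψ u)| := by
    have h := abs_sub (f p * (v - u)) (f p * (v - u) - (Ψ v - Ψ u))
    have he : f p * (v - u) - (f p * (v - u) - (Ψ v - Ψ u)) = Ψ v - Ψ u := by ring
    rw [he] at h
    exact h
  have hfp : |f p * (v - u)| < η / 8 := by
    rw [abs_mul, abs_of_pos (by linarith : (0:ℝ) < v - u)]
    calc |f p| * (v - u) ≤ (|f p| + 1) * (v - u) := by nlinarith [abs_nonneg (f p)]
      _ < (|f p| + 1) * (η / (8 * (|f p| + 1))) := by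
          apply mul_lt_mul_of_pos_left hρ2 (by positivity)
      _ = η / 8 := by
          field_simp
  linarith [hsh, habs, hfp]

end HK
namespace HK

variable {a b : ℝ}

/-- Negative part. -/
noncomputable def np (x : ℝ) : ℝ := max (-x) 0

lemma np_nonneg (x : ℝ) : 0 ≤ np x := le_max_right _ _

lemma neg_le_np (x : ℝ) : -x ≤ np x := le_max_left _ _

lemma np_le_abs (x : ℝ) : np x ≤ |x| :=
  max_le (neg_le_abs x) (abs_nonneg x)

lemma np_add (x y : ℝ) : np (x + y) ≤ np x + np y := by
  apply max_le
  · have := neg_le_np x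
    have := neg_le_np y
    linarith
  · have := np_nonneg x
    have := np_nonneg y
    linarith

lemma np_of_nonneg {x : ℝ} (h : 0 ≤ x) : np x = 0 := max_eq_right (by linarith)

lemma np_of_nonpos {x : ℝ} (h : x ≤ 0) : np x = -x := max_eq_left (by linarith)

lemma np_sum (s : Finset ℕ) (f : ℕ → ℝ) : np (∑ i ∈ s, f i) ≤ ∑ i ∈ s, np (f i) := by
  classical
  induction s using Finset.induction with
  | empty => simp [np]
  | insert x s hx ih =>
    rw [Finset.sum_insert hx, Finset.sum_insert hx]
    exact le_trans (np_add _ _) (by linarith)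

lemma tele_Ico (w : ℕ → ℝ) {p q : ℕ} (h : p ≤ q) :
    ∑ i ∈ Finset.Ico p q, (w (i + 1) - w i) = w q - w p := by
  rw [Finset.sum_Ico_eq_sub _ h, Finset.sum_range_sub, Finset.sum_range_sub]
  ring

lemma np_tele (w : ℕ → ℝ) {p q : ℕ} (h : p ≤ q) :
    np (w q - w p) ≤ ∑ i ∈ Finset.Ico p q, np (w (i + 1) - w i) := by
  rw [← tele_Ico w h]
  exact np_sum _ _

lemma sum_blocks (g : ℕ → ℝ) (ι : ℕ → ℕ) (m : ℕ) (h : ∀ k, k < m → ι k ≤ ι (k + 1)) :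
    ∑ k ∈ Finset.range m, ∑ i ∈ Finset.Ico (ι k) (ι (k + 1)), g i
      = ∑ i ∈ Finset.Ico (ι 0) (ι m), g i := by
  induction m with
  | zero => simp
  | succ m ih =>
    rw [Finset.sum_range_succ, ih (fun k hk => h k (by omega))]
    apply Finset.sum_Ico_consecutive
    · -- ι 0 ≤ ι m
      clear ih
      induction m with
      | zero => exact le_rfl
      | succ m ih2 => exact le_trans (ih2 (fun k hk => h k (by omega))) (h m (by omega))
    · exact h m (by omega)

/-- Refinement increases the negative variation. -/
lemma negvar_mono (Ψ : ℝ → ℝ) (C R : TaggedDiv a b)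
    (hsub : ∀ k, k ≤ C.n → ∃ i, i ≤ R.n ∧ R.u i = C.u k) :
    ∑ k ∈ Finset.range C.n, np (Ψ (C.u (k + 1)) - Ψ (C.u k))
      ≤ ∑ i ∈ Finset.range R.n, np (Ψ (R.u (i + 1)) - Ψ (R.u i)) := by
  classical
  have hsub' : ∀ k, ∃ i, k ≤ C.n → (i ≤ R.n ∧ R.u i = C.u k) := by
    intro k
    by_cases h : k ≤ C.n
    · obtain ⟨i, hi⟩ := hsub k h
      exact ⟨i, fun _ => hi⟩
    · exact ⟨0, fun h' => absurd h' h⟩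
  choose ι hι using hsub'
  have hval : ∀ k, k ≤ C.n → R.u (ι k) = C.u k := fun k hk => (hι k hk).2
  have hle : ∀ k, k ≤ C.n → ι k ≤ R.n := fun k hk => (hι k hk).1
  have hmono : ∀ k, k < C.n → ι k < ι (k + 1) := by
    intro k hk
    by_contra h
    push_neg at h
    have h1 : R.u (ι (k + 1)) ≤ R.u (ι k) := u_mono R h (hle k (le_of_lt hk))
    rw [hval k (le_of_lt hk), hval (k + 1) hk] at h1
    have := C.mono k hk
    linarith
  have hι0 : ι 0 = 0 := by
    by_contra h
    have h0 : 0 < ι 0 := Nat.pos_of_ne_zero h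
    have := u_strict_mono R h0 (hle 0 (Nat.zero_le _))
    rw [hval 0 (Nat.zero_le _), C.left, R.left] at this
    exact lt_irrefl _ this
  have hιn : ι C.n = R.n := by
    rcases lt_or_eq_of_le (hle C.n le_rfl) with h | h
    · exfalso
      have := u_strict_mono R h le_rfl
      rw [hval C.n le_rfl, C.right, R.right] at this
      exact lt_irrefl _ this
    · exact h
  calc ∑ k ∈ Finset.range C.n, np (Ψ (C.u (k + 1)) - Ψ (C.u k))
      ≤ ∑ k ∈ Finset.range C.n,
          ∑ i ∈ Finset.Ico (ι k) (ι (k + 1)), np (Ψ (R.u (i + 1)) - Ψ (R.u i)) := by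
        apply Finset.sum_le_sum
        intro k hk
        rw [Finset.mem_range] at hk
        rw [← hval k (le_of_lt hk), ← hval (k + 1) hk]
        exact np_tele (fun i => Ψ (R.u i)) (le_of_lt (hmono k hk))
    _ = ∑ i ∈ Finset.Ico (ι 0) (ι C.n), np (Ψ (R.u (i + 1)) - Ψ (R.u i)) :=
        sum_blocks _ ι C.n (fun k hk => le_of_lt (hmono k hk))
    _ = ∑ i ∈ Finset.range R.n, np (Ψ (R.u (i + 1)) - Ψ (R.u i)) := by
        rw [hι0, hιn, ← Finset.range_eq_Ico]

end HK
namespace HK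

variable {a b : ℝ}

/-- Every point of `[a, b]` lies in some interval of a tagged division. -/
lemma exists_interval (D : TaggedDiv a b) {x : ℝ} (hx : x ∈ Set.Icc a b) :
    ∃ j, j < D.n ∧ D.u j ≤ x ∧ x ≤ D.u (j + 1) := by
  classical
  have hn0 := D.n_pos
  have hex : ∃ j, x ≤ D.u (j + 1) := by
    refine ⟨D.n - 1, ?_⟩
    rw [show D.n - 1 + 1 = D.n by omega, D.right]
    exact hx.2
  set J := Nat.find hex with hJ
  have hJspec : x ≤ D.u (J + 1) := Nat.find_spec hex
  have hJn : J < D.n := by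
    have : J ≤ D.n - 1 := Nat.find_le (by
      rw [show D.n - 1 + 1 = D.n by omega, D.right]; exact hx.2)
    omega
  have huJ : D.u J ≤ x := by
    rcases Nat.eq_zero_or_pos J with h0 | h0
    · rw [h0, D.left]; exact hx.1
    · have := Nat.find_min hex (show J - 1 < J by omega)
      rw [show J - 1 + 1 = J by omega] at this
      exact le_of_lt (lt_of_not_ge this)
  exact ⟨J, hJn, huJ, hJspec⟩

/-- The core pair lemma: the minimum of two gauge integrable functions is
integrable, provided the mixed Riemann sums are bounded below. -/
lemma pair_min (hab : a < b) (f g : ℝ → ℝ) (F G : ℝ)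
    (hf : HKIntegral a b f F) (hg : HKIntegral a b g G)
    (δ : ℝ → ℝ) (hδ : IsGauge a b δ) (M : ℝ)
    (hM : ∀ D : TaggedDiv a b, D.IsFine δ → ∀ c : ℕ → Bool,
      M ≤ ∑ j ∈ Finset.range D.n,
        (if c j then f (D.t j) else g (D.t j)) * (D.u (j + 1) - D.u j)) :
    ∃ V, HKIntegral a b (fun x => min (f x) (g x)) V := by
  classical
  obtain ⟨Ψf, hΨfF, hΨf⟩ := exists_prim hab hf
  obtain ⟨Ψg, hΨgG, hΨg⟩ := exists_prim hab hg
  set φ : ℝ → ℝ := fun x => Ψf x - Ψg x with hφ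
  set Gf : ℝ := Ψg b - Ψg a with hGf
  set nv : TaggedDiv a b → ℝ :=
    fun D => ∑ j ∈ Finset.range D.n, np (φ (D.u (j + 1)) - φ (D.u j)) with hnv
  have hnv_pairSum : ∀ D : TaggedDiv a b,
      nv D = pairSum D (fun _ u v => np (φ v - φ u)) := fun D => rfl
  have hxnp : ∀ x : ℝ, x + np x = max x 0 := by
    intro x
    rcases le_total x 0 with h | h
    · rw [np_of_nonpos h, max_eq_right h]; ring
    · rw [np_of_nonneg h, max_eq_left h]; ring
  -- The core estimate, for any η > 0.
  have core : ∀ η : ℝ, 0 < η → ∃ γ0 : ℝ → ℝ, IsGauge a b γ0 ∧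
      (∀ x ∈ Set.Icc a b, γ0 x ≤ δ x) ∧
      ∀ D : TaggedDiv a b, D.IsFine γ0 →
        |D.riemannSum (fun x => min (f x) (g x)) - (Gf - nv D)| ≤ 12 * η ∧
        M - 12 * η ≤ Gf - nv D := by
    intro η hη
    obtain ⟨γf, hγf, hpf⟩ := hΨf a b le_rfl hab le_rfl η hη
    obtain ⟨γg, hγg, hpg⟩ := hΨg a b le_rfl hab le_rfl η hη
    refine ⟨fun x => min (δ x) (min (γf x) (γg x)), ?_, ?_, ?_⟩
    · intro x hx
      exact lt_min (hδ x hx) (lt_min (hγf x hx) (hγg x hx))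
    · intro x _; exact min_le_left _ _
    · intro D hD
      have hDδ : D.IsFine δ := isFine_mono hD (fun x _ => min_le_left _ _)
      have hDf : D.IsFine γf := isFine_mono hD
        (fun x _ => le_trans (min_le_right _ _) (min_le_left _ _))
      have hDg : D.IsFine γg := isFine_mono hD
        (fun x _ => le_trans (min_le_right _ _) (min_le_right _ _))
      set Δ : ℕ → ℝ := fun j => D.u (j + 1) - D.u j with hΔ
      set Φf : ℕ → ℝ := fun j => Ψf (D.u (j + 1)) - Ψf (D.u j) with hΦf
      set Φg : ℕ → ℝ := fun j => Ψg (D.u (j + 1)) - Ψg (D.u j) with hΦg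
      set φj : ℕ → ℝ := fun j => φ (D.u (j + 1)) - φ (D.u j) with hφj
      have hφjeq : ∀ j, φj j = Φf j - Φg j := by
        intro j; simp only [hφj, hΦf, hΦg, hφ]; ring
      have hΔpos : ∀ j, j < D.n → 0 < Δ j := fun j hj => by
        simp only [hΔ]; linarith [D.mono j hj]
      have hsumΦg : ∑ j ∈ Finset.range D.n, Φg j = Gf := by
        simp only [hΦg, hGf]
        rw [Finset.sum_range_sub (fun i => Ψg (D.u i)), D.left, D.right]
      -- Saks–Henstock bundles
      have hSHf : ∀ E : Finset ℕ, E ⊆ Finset.range D.n →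
          |∑ j ∈ E, (f (D.t j) * Δ j - Φf j)| < 2 * η := by
        intro E hE
        have := saks_henstock hab hΨf hγf hpf D hDf E hE hη
        calc |∑ j ∈ E, (f (D.t j) * Δ j - Φf j)|
            = |∑ j ∈ E, (f (D.t j) * (D.u (j + 1) - D.u j)
                - (Ψf (D.u (j + 1)) - Ψf (D.u j)))| := rfl
          _ < η + η := this
          _ = 2 * η := by ring
      have hSHg : ∀ E : Finset ℕ, E ⊆ Finset.range D.n →
          |∑ j ∈ E, (g (D.t j) * Δ j - Φg j)| < 2 * η := by
        intro E hE
        have := saks_henstock hab hΨg hγg hpg D hDg E hE hη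
        calc |∑ j ∈ E, (g (D.t j) * Δ j - Φg j)|
            = |∑ j ∈ E, (g (D.t j) * (D.u (j + 1) - D.u j)
                - (Ψg (D.u (j + 1)) - Ψg (D.u j)))| := rfl
          _ < η + η := this
          _ = 2 * η := by ring
      have hABSf : ∑ j ∈ Finset.range D.n, |f (D.t j) * Δ j - Φf j| ≤ 4 * η := by
        have := saks_henstock_abs hab hΨf hγf hpf D hDf (Finset.range D.n) le_rfl hη
        calc ∑ j ∈ Finset.range D.n, |f (D.t j) * Δ j - Φf j|
            = ∑ j ∈ Finset.range D.n, |f (D.t j) * (D.u (j + 1) - D.u j)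
                - (Ψf (D.u (j + 1)) - Ψf (D.u j))| := rfl
          _ ≤ 2 * (η + η) := this
          _ = 4 * η := by ring
      have hABSg : ∑ j ∈ Finset.range D.n, |g (D.t j) * Δ j - Φg j| ≤ 4 * η := by
        have := saks_henstock_abs hab hΨg hγg hpg D hDg (Finset.range D.n) le_rfl hη
        calc ∑ j ∈ Finset.range D.n, |g (D.t j) * Δ j - Φg j|
            = ∑ j ∈ Finset.range D.n, |g (D.t j) * (D.u (j + 1) - D.u j)
                - (Ψg (D.u (j + 1)) - Ψg (D.u j))| := rfl
          _ ≤ 2 * (η + η) := this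
          _ = 4 * η := by ring
      set e : ℕ → ℝ := fun j => |f (D.t j) * Δ j - Φf j| + |g (D.t j) * Δ j - Φg j|
        with he
      have hesum : ∑ j ∈ Finset.range D.n, e j ≤ 8 * η := by
        simp only [he]
        rw [Finset.sum_add_distrib]
        linarith [hABSf, hABSg]
      constructor
      · -- estimate (A)
        set E := (Finset.range D.n).filter (fun j => f (D.t j) ≤ g (D.t j)) with hE
        set Ec := (Finset.range D.n).filter (fun j => ¬ f (D.t j) ≤ g (D.t j)) with hEc
        have hEsub : E ⊆ Finset.range D.n := Finset.filter_subset _ _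
        have hEcsub : Ec ⊆ Finset.range D.n := Finset.filter_subset _ _
        have h1 : D.riemannSum (fun x => min (f x) (g x))
            = ∑ j ∈ E, f (D.t j) * Δ j + ∑ j ∈ Ec, g (D.t j) * Δ j := by
          rw [TaggedDiv.riemannSum,
            ← Finset.sum_filter_add_sum_filter_not (Finset.range D.n)
              (fun j => f (D.t j) ≤ g (D.t j))]
          congr 1
          · apply Finset.sum_congr rfl
            intro j hj
            have := (Finset.mem_filter.mp hj).2
            rw [min_eq_left this]
          · apply Finset.sum_congr rfl
            intro j hj
            have := (Finset.mem_filter.mp hj).2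
            rw [min_eq_right (le_of_not_ge this)]
        have h4 : ∑ j ∈ E, Φf j + ∑ j ∈ Ec, Φg j = Gf + ∑ j ∈ E, φj j := by
          have hgsplit : ∑ j ∈ E, Φg j + ∑ j ∈ Ec, Φg j = Gf := by
            rw [← hsumΦg]
            exact Finset.sum_filter_add_sum_filter_not _ _ _
          have : ∑ j ∈ E, Φf j = ∑ j ∈ E, Φg j + ∑ j ∈ E, φj j := by
            rw [← Finset.sum_add_distrib]
            apply Finset.sum_congr rfl
            intro j _
            rw [hφjeq j]; ring
          linarith [hgsplit, this]
        have h2 : |∑ j ∈ E, (f (D.t j) * Δ j - Φf j)| < 2 * η := hSHf E hEsub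
        have h3 : |∑ j ∈ Ec, (g (D.t j) * Δ j - Φg j)| < 2 * η := hSHg Ec hEcsub
        -- (c) step: |∑_E φj + nv D| ≤ 8η
        have hnvsplit : nv D = ∑ j ∈ E, np (φj j) + ∑ j ∈ Ec, np (φj j) := by
          rw [hnv]
          exact (Finset.sum_filter_add_sum_filter_not _ _ _).symm
        have hc1 : ∀ j ∈ E, φj j + np (φj j) ≤ e j := by
          intro j hj
          have hjn := Finset.mem_range.mp (hEsub hj)
          have hfg := (Finset.mem_filter.mp hj).2
          rw [hxnp]
          apply max_le
          · have hid : φj j = -(f (D.t j) * Δ j - Φf j) + (g (D.t j) * Δ j - Φg j)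
                + (f (D.t j) - g (D.t j)) * Δ j := by
              rw [hφjeq j]; ring
            have h6 : (f (D.t j) - g (D.t j)) * Δ j ≤ 0 :=
              mul_nonpos_of_nonpos_of_nonneg (by linarith) (le_of_lt (hΔpos j hjn))
            have l1 := neg_le_abs (f (D.t j) * Δ j - Φf j)
            have l2 := le_abs_self (g (D.t j) * Δ j - Φg j)
            calc φj j ≤ |f (D.t j) * Δ j - Φf j| + |g (D.t j) * Δ j - Φg j| := by
                  rw [hid]; linarith
              _ = e j := rfl
          · simp only [he]; positivity
        have hc2 : ∀ j ∈ Ec, np (φj j) ≤ e j := by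
          intro j hj
          have hjn := Finset.mem_range.mp (hEcsub hj)
          have hfg := le_of_not_ge (Finset.mem_filter.mp hj).2
          apply max_le
          · have h6 : 0 ≤ (f (D.t j) - g (D.t j)) * Δ j :=
              mul_nonneg (by linarith) (le_of_lt (hΔpos j hjn))
            have hid : - φj j = (f (D.t j) * Δ j - Φf j) - (g (D.t j) * Δ j - Φg j)
                - (f (D.t j) - g (D.t j)) * Δ j := by
              rw [hφjeq j]; ring
            have l1 := le_abs_self (f (D.t j) * Δ j - Φf j)
            have l2 := neg_le_abs (g (D.t j) * Δ j - Φg j)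
            calc - φj j ≤ |f (D.t j) * Δ j - Φf j| + |g (D.t j) * Δ j - Φg j| := by
                  rw [hid]; linarith
              _ = e j := rfl
          · simp only [he]; positivity
        have h8 : |∑ j ∈ E, φj j + nv D| ≤ 8 * η := by
          have hval : ∑ j ∈ E, φj j + nv D
              = ∑ j ∈ E, (φj j + np (φj j)) + ∑ j ∈ Ec, np (φj j) := by
            rw [hnvsplit, Finset.sum_add_distrib]; ring
          have hub : ∑ j ∈ E, φj j + nv D ≤ ∑ j ∈ Finset.range D.n, e j := by
            rw [hval, ← Finset.sum_filter_add_sum_filter_not (Finset.range D.n)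
              (fun j => f (D.t j) ≤ g (D.t j)) e]
            apply add_le_add
            · exact Finset.sum_le_sum hc1
            · exact Finset.sum_le_sum hc2
          have hlb : 0 ≤ ∑ j ∈ E, φj j + nv D := by
            rw [hval]
            apply add_nonneg
            · apply Finset.sum_nonneg
              intro j hj
              rw [hxnp]
              exact le_max_right _ _
            · exact Finset.sum_nonneg (fun j _ => np_nonneg _)
          rw [abs_of_nonneg hlb]
          linarith [hub, hesum]
        -- assemble (A)
        have hEq : D.riemannSum (fun x => min (f x) (g x)) - (Gf - nv D)
            = (∑ j ∈ E, (f (D.t j) * Δ j - Φf j))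
              + (∑ j ∈ Ec, (g (D.t j) * Δ j - Φg j))
              + (∑ j ∈ E, φj j + nv D) := by
          have hsf : ∑ j ∈ E, (f (D.t j) * Δ j - Φf j)
              = ∑ j ∈ E, f (D.t j) * Δ j - ∑ j ∈ E, Φf j := Finset.sum_sub_distrib _ _
          have hsg : ∑ j ∈ Ec, (g (D.t j) * Δ j - Φg j)
              = ∑ j ∈ Ec, g (D.t j) * Δ j - ∑ j ∈ Ec, Φg j := Finset.sum_sub_distrib _ _
          rw [h1]
          linarith [h4, hsf, hsg]
        rw [hEq]
        have := abs_add_le (∑ j ∈ E, (f (D.t j) * Δ j - Φf j)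
          + ∑ j ∈ Ec, (g (D.t j) * Δ j - Φg j)) (∑ j ∈ E, φj j + nv D)
        have := abs_add_le (∑ j ∈ E, (f (D.t j) * Δ j - Φf j))
          (∑ j ∈ Ec, (g (D.t j) * Δ j - Φg j))
        linarith [h2, h3, h8]
      · -- estimate (B): lower bound via hM
        set E' := (Finset.range D.n).filter (fun j => φj j < 0) with hE'
        set E'c := (Finset.range D.n).filter (fun j => ¬ φj j < 0) with hE'c
        have hmix := hM D hDδ (fun j => decide (φj j < 0))
        have hmixEq : ∑ j ∈ Finset.range D.n,
            (if decide (φj j < 0) then f (D.t j) else g (D.t j)) * (D.u (j + 1) - D.u j)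
            = ∑ j ∈ E', f (D.t j) * Δ j + ∑ j ∈ E'c, g (D.t j) * Δ j := by
          rw [← Finset.sum_filter_add_sum_filter_not (Finset.range D.n)
            (fun j => φj j < 0)]
          congr 1
          · apply Finset.sum_congr rfl
            intro j hj
            have := (Finset.mem_filter.mp hj).2
            rw [if_pos (by simpa using this)]
          · apply Finset.sum_congr rfl
            intro j hj
            have := (Finset.mem_filter.mp hj).2
            rw [if_neg (by simpa using this)]
        have h2 : |∑ j ∈ E', (f (D.t j) * Δ j - Φf j)| < 2 * η :=
          hSHf E' (Finset.filter_subset _ _)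
        have h3 : |∑ j ∈ E'c, (g (D.t j) * Δ j - Φg j)| < 2 * η :=
          hSHg E'c (Finset.filter_subset _ _)
        have h4 : ∑ j ∈ E', Φf j + ∑ j ∈ E'c, Φg j = Gf + ∑ j ∈ E', φj j := by
          have hgsplit : ∑ j ∈ E', Φg j + ∑ j ∈ E'c, Φg j = Gf := by
            rw [← hsumΦg]
            exact Finset.sum_filter_add_sum_filter_not _ _ _
          have : ∑ j ∈ E', Φf j = ∑ j ∈ E', Φg j + ∑ j ∈ E', φj j := by
            rw [← Finset.sum_add_distrib]
            apply Finset.sum_congr rfl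
            intro j _
            rw [hφjeq j]; ring
          linarith [hgsplit, this]
        have h5 : ∑ j ∈ E', φj j = - nv D := by
          have hnvsplit : nv D = ∑ j ∈ E', np (φj j) + ∑ j ∈ E'c, np (φj j) := by
            rw [hnv]
            exact (Finset.sum_filter_add_sum_filter_not _ _ _).symm
          have ha : ∑ j ∈ E', np (φj j) = - ∑ j ∈ E', φj j := by
            rw [← Finset.sum_neg_distrib]
            apply Finset.sum_congr rfl
            intro j hj
            exact np_of_nonpos (le_of_lt (Finset.mem_filter.mp hj).2)
          have hb : ∑ j ∈ E'c, np (φj j) = 0 := by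
            apply Finset.sum_eq_zero
            intro j hj
            exact np_of_nonneg (le_of_not_gt (Finset.mem_filter.mp hj).2)
          rw [hnvsplit, ha, hb]
          ring
        rw [hmixEq] at hmix
        have habs1 : ∑ j ∈ E', f (D.t j) * Δ j
            ≤ ∑ j ∈ E', Φf j + 2 * η := by
          have hsf : ∑ j ∈ E', (f (D.t j) * Δ j - Φf j)
              = ∑ j ∈ E', f (D.t j) * Δ j - ∑ j ∈ E', Φf j := Finset.sum_sub_distrib _ _
          have := le_abs_self (∑ j ∈ E', (f (D.t j) * Δ j - Φf j))
          linarith [h2, hsf]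
        have habs2 : ∑ j ∈ E'c, g (D.t j) * Δ j
            ≤ ∑ j ∈ E'c, Φg j + 2 * η := by
          have hsg : ∑ j ∈ E'c, (g (D.t j) * Δ j - Φg j)
              = ∑ j ∈ E'c, g (D.t j) * Δ j - ∑ j ∈ E'c, Φg j := Finset.sum_sub_distrib _ _
          have := le_abs_self (∑ j ∈ E'c, (g (D.t j) * Δ j - Φg j))
          linarith [h3, hsg]
        have : M ≤ Gf + ∑ j ∈ E', φj j + 4 * η := by linarith [hmix, habs1, habs2, h4]
        rw [h5] at this
        linarith
  -- the set of negative variations is bounded above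
  have hbdd : ∀ D : TaggedDiv a b, nv D ≤ Gf - M + 12 := by
    intro D
    obtain ⟨γ0, hγ0, hγ0δ, hcore⟩ := core 1 one_pos
    have hparts : ∀ j, j < D.n → ∃ P : TaggedDiv (D.u j) (D.u (j + 1)), P.IsFine γ0 :=
      fun j hj => cousin _ _ (D.mono j hj) γ0
        (isGauge_mono hγ0 (Set.Icc_subset_Icc (u_mem D (le_of_lt hj)).1 (u_mem D hj).2))
    choose parts hparts using hparts
    obtain ⟨R, hRsum, hRfine, _⟩ := glue D parts
    have hRf : R.IsFine γ0 := hRfine γ0 hparts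
    have h1 : nv D ≤ nv R := by
      rw [hnv_pairSum R, hRsum, hnv]
      apply Finset.sum_le_sum
      intro j hj
      rw [Finset.mem_range] at hj
      rw [dif_pos hj]
      have hP := np_tele (fun i => φ ((parts j hj).u i)) (Nat.zero_le (parts j hj).n)
      have hP' : np (φ ((parts j hj).u (parts j hj).n) - φ ((parts j hj).u 0))
          ≤ ∑ i ∈ Finset.Ico 0 (parts j hj).n,
            np (φ ((parts j hj).u (i + 1)) - φ ((parts j hj).u i)) := hP
      rw [(parts j hj).left, (parts j hj).right] at hP'
      calc np (φ (D.u (j + 1)) - φ (D.u j))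
          ≤ ∑ i ∈ Finset.Ico 0 (parts j hj).n,
              np (φ ((parts j hj).u (i + 1)) - φ ((parts j hj).u i)) := hP'
        _ = pairSum (parts j hj) (fun _ u v => np (φ v - φ u)) := by
            rw [← Finset.range_eq_Ico]; rfl
    have h2 := (hcore R hRf).2
    linarith
  have hne : ∃ x, ∃ D : TaggedDiv a b, nv D = x :=
    ⟨_, single a b a hab ⟨le_rfl, le_of_lt hab⟩, rfl⟩
  set ν := sSup {x | ∃ D : TaggedDiv a b, nv D = x} with hν
  have hbddA : BddAbove {x | ∃ D : TaggedDiv a b, nv D = x} := by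
    refine ⟨Gf - M + 12, ?_⟩
    rintro x ⟨D, rfl⟩
    exact hbdd D
  have hνmem : ∀ D : TaggedDiv a b, nv D ≤ ν :=
    fun D => le_csSup hbddA ⟨D, rfl⟩
  refine ⟨Gf - ν, ?_⟩
  intro ε hε
  set η := ε / 30 with hηdef
  have hη : 0 < η := by positivity
  obtain ⟨γ0, hγ0, hγ0δ, hcore⟩ := core η hη
  -- choose a division almost attaining ν
  obtain ⟨x0, ⟨D0, hD0x⟩, hx0⟩ := exists_lt_of_lt_csSup
    (by obtain ⟨x, hx⟩ := hne; exact ⟨x, hx⟩)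
    (show ν - η < ν by linarith)
  have hD0 : ν - η < nv D0 := by rw [hD0x]; exact hx0
  set Q : Finset ℝ := Finset.image (fun k => D0.u k) (Finset.range (D0.n + 1)) with hQ
  have hQne : Q.Nonempty := by
    refine ⟨a, ?_⟩
    rw [hQ]
    apply Finset.mem_image.mpr
    exact ⟨0, Finset.mem_range.mpr (by omega), D0.left⟩
  set r : ℕ := Q.card with hr
  have hr0 : 0 < r := Finset.card_pos.mpr hQne
  have hrR : (0:ℝ) < r := by exact_mod_cast hr0
  have hQab : ∀ q ∈ Q, q ∈ Set.Icc a b := by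
    intro q hq
    rw [hQ] at hq
    obtain ⟨k, hk, rfl⟩ := Finset.mem_image.mp hq
    rw [Finset.mem_range] at hk
    exact u_mem D0 (by omega)
  -- continuity radii at the points of Q
  have hρex : ∀ q ∈ Q, ∃ ρ : ℝ, 0 < ρ ∧ ∀ u v, a ≤ u → u ≤ q → q ≤ v → v ≤ b →
      u < v → v - u < ρ → |φ v - φ u| < η / (2 * r) := by
    intro q hq
    have hq' := hQab q hq
    have h2r : (0:ℝ) < η / (4 * r) := by positivity
    obtain ⟨ρ1, hρ1, hc1⟩ := prim_cont hab hΨf q hq' h2r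
    obtain ⟨ρ2, hρ2, hc2⟩ := prim_cont hab hΨg q hq' h2r
    refine ⟨min ρ1 ρ2, lt_min hρ1 hρ2, ?_⟩
    intro u v hau hup hpv hvb huv hlt
    have e1 := hc1 u v hau hup hpv hvb huv (lt_of_lt_of_le hlt (min_le_left _ _))
    have e2 := hc2 u v hau hup hpv hvb huv (lt_of_lt_of_le hlt (min_le_right _ _))
    have habs : |φ v - φ u| ≤ |Ψf v - Ψf u| + |Ψg v - Ψg u| := by
      simp only [hφ]
      have hid : Ψf v - Ψg v - (Ψf u - Ψg u) = (Ψf v - Ψf u) - (Ψg v - Ψg u) := by ring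
      rw [hid]
      exact abs_sub _ _
    have hr4 : η / (4 * r) + η / (4 * r) = η / (2 * r) := by field_simp; ring
    linarith [e1, e2, habs]
  choose! ρfun hρpos hρspec using hρex
  set dQ : ℝ → ℝ := fun x => if h : (Q.erase x).Nonempty
      then (Q.erase x).inf' h (fun q => |x - q|) else 1 with hdQ
  have hdQpos : ∀ x, 0 < dQ x := by
    intro x
    rw [hdQ]
    dsimp only
    split_ifs with h
    · rw [Finset.lt_inf'_iff]
      intro q hq
      have h1 : q ≠ x := (Finset.mem_erase.mp hq).1
      exact abs_pos.mpr (sub_ne_zero.mpr (Ne.symm h1))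
    · exact one_pos
  have hdQle : ∀ x q, q ∈ Q → q ≠ x → dQ x ≤ |x - q| := by
    intro x q hq hne
    have hmem : q ∈ Q.erase x := Finset.mem_erase.mpr ⟨hne, hq⟩
    rw [hdQ]
    dsimp only
    rw [dif_pos ⟨q, hmem⟩]
    exact Finset.inf'_le _ hmem
  set γs : ℝ → ℝ := fun x => min (γ0 x) (min (dQ x) (if x ∈ Q then ρfun x else 1))
    with hγs
  refine ⟨γs, ?_, ?_⟩
  · intro x hx
    refine lt_min (hγ0 x hx) (lt_min (hdQpos x) ?_)
    split_ifs with h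
    · exact hρpos x h
    · exact one_pos
  · intro D hD
    have hD0fine : D.IsFine γ0 := isFine_mono hD (fun x _ => min_le_left _ _)
    obtain ⟨hA, hB⟩ := hcore D hD0fine
    have hforce : ∀ q ∈ Q, ∀ j, j < D.n → D.u j ≤ q → q ≤ D.u (j + 1) → D.t j = q := by
      intro q hq
      apply tag_forced hD
      intro x _ hne
      calc γs x ≤ dQ x := le_trans (min_le_right _ _) (min_le_left _ _)
        _ ≤ |x - q| := hdQle x q hq (Ne.symm hne)
    have hup : nv D ≤ ν := hνmem D
    -- build the split refinement
    have hpartsex : ∀ j, j < D.n → ∃ P : TaggedDiv (D.u j) (D.u (j + 1)),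
        (pairSum P (fun _ u v => np (φ v - φ u))
            ≤ np (φ (D.u (j + 1)) - φ (D.u j))
              + (if D.t j ∈ Q ∧ D.u j < D.t j ∧ D.t j < D.u (j + 1) then η / r else 0)) ∧
        ((D.t j ∈ Q ∧ D.u j < D.t j ∧ D.t j < D.u (j + 1)) → ∃ i, i ≤ P.n ∧ P.u i = D.t j) := by
      intro j hj
      by_cases hc : D.t j ∈ Q ∧ D.u j < D.t j ∧ D.t j < D.u (j + 1)
      · obtain ⟨htQ, hu1, hu2⟩ := hc
        have hfinej := hD j hj
        have hγtj : γs (D.t j) ≤ ρfun (D.t j) := by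
          refine le_trans (min_le_right _ _) (le_trans (min_le_right _ _) ?_)
          rw [if_pos htQ]
        have hlen1 : D.t j - D.u j < ρfun (D.t j) := by
          have h1 := (hfinej ⟨le_rfl, le_of_lt (lt_trans hu1 hu2)⟩).1
          linarith [hγtj]
        have hlen2 : D.u (j + 1) - D.t j < ρfun (D.t j) := by
          have h1 := (hfinej ⟨le_of_lt (lt_trans hu1 hu2), le_rfl⟩).2
          linarith [hγtj]
        have hq1 : |φ (D.t j) - φ (D.u j)| < η / (2 * r) :=
          hρspec (D.t j) htQ (D.u j) (D.t j) (u_mem D (le_of_lt hj)).1 (le_of_lt hu1)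
            le_rfl (le_trans (le_of_lt hu2) (u_mem D hj).2) hu1 hlen1
        have hq2 : |φ (D.u (j + 1)) - φ (D.t j)| < η / (2 * r) :=
          hρspec (D.t j) htQ (D.t j) (D.u (j + 1))
            (le_trans (u_mem D (le_of_lt hj)).1 (le_of_lt hu1))
            le_rfl (le_of_lt hu2) (u_mem D hj).2 hu2 hlen2
        refine ⟨concat (single (D.u j) (D.t j) (D.t j) hu1 (Set.mem_Icc.mpr ⟨le_of_lt hu1, le_rfl⟩))
            (single (D.t j) (D.u (j + 1)) (D.t j) hu2 (Set.mem_Icc.mpr ⟨le_rfl, le_of_lt hu2⟩)), ?_, ?_⟩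
        · rw [pairSum_concat]
          simp only [pairSum_single]
          rw [if_pos (⟨htQ, hu1, hu2⟩ :
            D.t j ∈ Q ∧ D.u j < D.t j ∧ D.t j < D.u (j + 1))]
          have n1 := np_le_abs (φ (D.t j) - φ (D.u j))
          have n2 := np_le_abs (φ (D.u (j + 1)) - φ (D.t j))
          have n0 := np_nonneg (φ (D.u (j + 1)) - φ (D.u j))
          have hhalf : η / (2 * r) + η / (2 * r) = η / r := by field_simp; ring
          linarith [hq1, hq2]
        · intro _
          refine ⟨1, ?_, ?_⟩
          · simp [concat_n]
          · rw [concat_u_left _ _ (by simp : 1 ≤ (single (D.u j) (D.t j) (D.t j) hu1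
              (Set.mem_Icc.mpr ⟨le_of_lt hu1, le_rfl⟩)).n)]
            rfl
      · refine ⟨single (D.u j) (D.u (j + 1)) (D.t j) (D.mono j hj) (D.tag_mem j hj),
          ?_, fun h => absurd h hc⟩
        rw [if_neg hc]
        simp only [pairSum_single]
        simp [np_nonneg]
    choose parts hparts1 hparts2 using hpartsex
    obtain ⟨R, hRsum, _, hRmem⟩ := glue D parts
    have hmemR : ∀ k, k ≤ D0.n → ∃ i, i ≤ R.n ∧ R.u i = D0.u k := by
      intro k hk
      have hqQ : D0.u k ∈ Q := by
        rw [hQ]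
        exact Finset.mem_image.mpr ⟨k, Finset.mem_range.mpr (by omega), rfl⟩
      have hqab := hQab _ hqQ
      obtain ⟨j, hjn, hj1, hj2⟩ := exists_interval D hqab
      rcases eq_or_lt_of_le hj1 with he1 | he1
      · obtain ⟨i', hi', hval⟩ := hRmem j hjn 0 (Nat.zero_le _)
        refine ⟨i', hi', ?_⟩
        rw [hval, (parts j hjn).left]
        exact he1
      · rcases eq_or_lt_of_le hj2 with he2 | he2
        · obtain ⟨i', hi', hval⟩ := hRmem j hjn (parts j hjn).n le_rfl
          refine ⟨i', hi', ?_⟩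
          rw [hval, (parts j hjn).right]
          exact he2.symm
        · have htj : D.t j = D0.u k := hforce _ hqQ j hjn (le_of_lt he1) (le_of_lt he2)
          have hcnd : D.t j ∈ Q ∧ D.u j < D.t j ∧ D.t j < D.u (j + 1) := by
            rw [htj]; exact ⟨hqQ, he1, he2⟩
          obtain ⟨i, hi, hval⟩ := hparts2 j hjn hcnd
          obtain ⟨i', hi', hval'⟩ := hRmem j hjn i hi
          refine ⟨i', hi', ?_⟩
          rw [hval', hval, htj]
    have h6b : nv D0 ≤ nv R := negvar_mono φ D0 R hmemR
    -- nv R ≤ nv D + η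
    have hcount : ((Finset.range D.n).filter
        (fun j => D.t j ∈ Q ∧ D.u j < D.t j ∧ D.t j < D.u (j + 1))).card ≤ r := by
      rw [hr]
      apply Finset.card_le_card_of_injOn (fun j => D.t j)
      · intro j hj
        exact (Finset.mem_filter.mp hj).2.1
      · intro j1 h1 j2 h2 heq
        by_contra hne12
        rcases Nat.lt_or_ge j1 j2 with hlt | hge
        · have c1 := (Finset.mem_filter.mp h1).2.2.2
          have c2 := (Finset.mem_filter.mp h2).2.2.1
          have hu12 : D.u (j1 + 1) ≤ D.u j2 := u_mono D hlt
            (le_of_lt (Finset.mem_range.mp (Finset.mem_filter.mp h2).1))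
          simp only at heq
          linarith [heq.ge, heq.le]
        · have hlt : j2 < j1 := by omega
          have c1 := (Finset.mem_filter.mp h2).2.2.2
          have c2 := (Finset.mem_filter.mp h1).2.2.1
          have hu12 : D.u (j2 + 1) ≤ D.u j1 := u_mono D hlt
            (le_of_lt (Finset.mem_range.mp (Finset.mem_filter.mp h1).1))
          simp only at heq
          linarith [heq.ge, heq.le]
    have h6a : nv R ≤ nv D + η := by
      rw [hnv_pairSum R, hRsum]
      have hb : ∀ j ∈ Finset.range D.n,
          (if h : j < D.n then pairSum (parts j h) (fun _ u v => np (φ v - φ u)) else 0)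
          ≤ np (φ (D.u (j + 1)) - φ (D.u j))
            + (if D.t j ∈ Q ∧ D.u j < D.t j ∧ D.t j < D.u (j + 1) then η / r else 0) := by
        intro j hj
        rw [Finset.mem_range] at hj
        rw [dif_pos hj]
        exact hparts1 j hj
      have hs1 := Finset.sum_le_sum hb
      have hs2 : ∑ j ∈ Finset.range D.n,
          (np (φ (D.u (j + 1)) - φ (D.u j))
            + (if D.t j ∈ Q ∧ D.u j < D.t j ∧ D.t j < D.u (j + 1) then η / r else 0))
          = nv D + ∑ j ∈ Finset.range D.n,
              (if D.t j ∈ Q ∧ D.u j < D.t j ∧ D.t j < D.u (j + 1) then η / r else 0) := by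
        rw [Finset.sum_add_distrib]
      have hs3 : ∑ j ∈ Finset.range D.n,
          (if D.t j ∈ Q ∧ D.u j < D.t j ∧ D.t j < D.u (j + 1) then η / r else 0) ≤ η := by
        rw [← Finset.sum_filter]
        rw [Finset.sum_const, nsmul_eq_mul]
        calc (((Finset.range D.n).filter _).card : ℝ) * (η / r)
            ≤ (r : ℝ) * (η / r) := by
              apply mul_le_mul_of_nonneg_right _ (by positivity)
              exact_mod_cast hcount
          _ = η := by field_simp
      linarith [hs1, hs2, hs3]
    have hlow : ν - 2 * η ≤ nv D := by linarith [hD0, h6b, h6a]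
    have hcl : |nv D - ν| ≤ 2 * η := abs_le.mpr ⟨by linarith, by linarith [hup, hη]⟩
    have hkey : D.riemannSum (fun x => min (f x) (g x)) - (Gf - ν)
        = (D.riemannSum (fun x => min (f x) (g x)) - (Gf - nv D)) - (nv D - ν) := by
      ring
    have heps : ε = 30 * η := by rw [hηdef]; ring
    calc |D.riemannSum (fun x => min (f x) (g x)) - (Gf - ν)|
        ≤ |D.riemannSum (fun x => min (f x) (g x)) - (Gf - nv D)| + |nv D - ν| := by
          rw [hkey]; exact abs_sub _ _
      _ ≤ 12 * η + 2 * η := add_le_add hA hcl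
      _ < ε := by rw [heps]; linarith

end HK

/-- **Theorem 4.2.4.** If the mixed Riemann sums of `s_N, …, s_P` are bounded below, then
the pointwise minimum `min_{N ≤ n ≤ P} sₙ` is gauge integrable. -/
theorem min_hkIntegrable (a b : ℝ) (hab : a < b) (N P : ℕ) (hN : 0 < N) (hNP : N < P)
    (s : ℕ → ℝ → ℝ)
    (hs : ∀ n : ℕ, N ≤ n → n ≤ P → ∃ Sn : ℝ, HKIntegral a b (s n) Sn)
    (δ : ℝ → ℝ) (hδ : IsGauge a b δ) (M : ℝ)
    (hM : ∀ D : TaggedDiv a b, D.IsFine δ → ∀ nf : ℕ → ℕ,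
      (∀ j < D.n, N ≤ nf j ∧ nf j ≤ P) →
      M ≤ ∑ j ∈ Finset.range D.n, s (nf j) (D.t j) * (D.u (j + 1) - D.u j)) :
    ∃ V : ℝ, HKIntegral a b
      (fun x => (Finset.Icc N P).inf' (Finset.nonempty_Icc.mpr hNP.le) (fun n => s n x))
      V := by
  classical
  -- strengthen hM: mixed sums need bounds only at indices j < D.n, but we need them
  -- for all j; massage index functions.
  have hM' : ∀ D : TaggedDiv a b, D.IsFine δ → ∀ nf : ℕ → ℕ,
      (∀ j, j < D.n → N ≤ nf j ∧ nf j ≤ P) →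
      M ≤ ∑ j ∈ Finset.range D.n, s (nf j) (D.t j) * (D.u (j + 1) - D.u j) :=
    fun D hD nf h => hM D hD nf h
  have key : ∀ d q, N ≤ q → ∀ hq2 : q ≤ P, P - q ≤ d →
      ∃ V : ℝ, HKIntegral a b
        (fun x => (Finset.Icc q P).inf' (Finset.nonempty_Icc.mpr hq2) (fun n => s n x))
        V := by
    intro d
    induction d with
    | zero =>
      intro q hq1 hq2 hd
      have hqP : q = P := by omega
      subst hqP
      obtain ⟨SP, hSP⟩ := hs q hq1 le_rfl
      refine ⟨SP, ?_⟩
      have hfun : (fun x => (Finset.Icc q q).inf' (Finset.nonempty_Icc.mpr hq2)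
          (fun n => s n x)) = s q := by
        funext x
        apply le_antisymm
        · exact Finset.inf'_le _ (Finset.mem_Icc.mpr ⟨le_rfl, le_rfl⟩)
        · apply Finset.le_inf'
          intro n hn
          have hn' : n = q := by
            have := Finset.mem_Icc.mp hn; omega
          rw [hn']
      rw [hfun]
      exact hSP
    | succ d ih =>
      intro q hq1 hq2 hd
      rcases eq_or_lt_of_le hq2 with hqP | hqP
      · subst hqP
        obtain ⟨SP, hSP⟩ := hs q hq1 le_rfl
        refine ⟨SP, ?_⟩
        have hfun : (fun x => (Finset.Icc q q).inf' (Finset.nonempty_Icc.mpr hq2)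
            (fun n => s n x)) = s q := by
          funext x
          apply le_antisymm
          · exact Finset.inf'_le _ (Finset.mem_Icc.mpr ⟨le_rfl, le_rfl⟩)
          · apply Finset.le_inf'
            intro n hn
            have hn' : n = q := by
              have := Finset.mem_Icc.mp hn; omega
            rw [hn']
        rw [hfun]
        exact hSP
      · have hq2' : q + 1 ≤ P := hqP
        obtain ⟨W, hW⟩ := ih (q + 1) (by omega) hq2' (by omega)
        obtain ⟨Fq, hFq⟩ := hs q hq1 hq2
        set gmin : ℝ → ℝ := fun x => (Finset.Icc (q + 1) P).inf'
          (Finset.nonempty_Icc.mpr hq2') (fun n => s n x) with hgmin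
        have hmix : ∀ D : TaggedDiv a b, D.IsFine δ → ∀ c : ℕ → Bool,
            M ≤ ∑ j ∈ Finset.range D.n,
              (if c j then s q (D.t j) else gmin (D.t j)) * (D.u (j + 1) - D.u j) := by
          intro D hD c
          have hsel : ∀ j : ℕ, ∃ n, n ∈ Finset.Icc (q + 1) P ∧
              gmin (D.t j) = s n (D.t j) := by
            intro j
            obtain ⟨n, hn, he⟩ := Finset.exists_mem_eq_inf'
              (Finset.nonempty_Icc.mpr hq2') (fun n => s n (D.t j))
            exact ⟨n, hn, he⟩
          choose sel hselmem hselval using hsel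
          have hMD := hM' D hD (fun j => if c j then q else sel j) ?_
          · refine le_trans hMD (le_of_eq ?_)
            apply Finset.sum_congr rfl
            intro j _
            by_cases hcj : c j
            · rw [if_pos hcj, if_pos hcj]
            · rw [if_neg hcj, if_neg hcj, ← hselval j]
          · intro j _
            by_cases hcj : c j
            · rw [if_pos hcj]
              exact ⟨hq1, hq2⟩
            · rw [if_neg hcj]
              have := Finset.mem_Icc.mp (hselmem j)
              constructor <;> omega
        obtain ⟨V, hV⟩ := HK.pair_min hab (s q) gmin Fq W hFq hW δ hδ M hmix
        refine ⟨V, ?_⟩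
        have hfun : (fun x => (Finset.Icc q P).inf' (Finset.nonempty_Icc.mpr hq2)
            (fun n => s n x)) = fun x => min (s q x) (gmin x) := by
          funext x
          apply le_antisymm
          · apply le_min
            · exact Finset.inf'_le _ (Finset.mem_Icc.mpr ⟨le_rfl, hq2⟩)
            · rw [hgmin]
              apply Finset.le_inf'
              intro n hn
              have hn' := Finset.mem_Icc.mp hn
              exact Finset.inf'_le _ (Finset.mem_Icc.mpr ⟨by omega, hn'.2⟩)
          · apply Finset.le_inf'
            intro n hn
            have hn' := Finset.mem_Icc.mp hn
            rcases Nat.eq_or_lt_of_le hn'.1 with he | he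
            · rw [← he]
              exact min_le_left _ _
            · refine le_trans (min_le_right _ _) ?_
              rw [hgmin]
              exact Finset.inf'_le _ (Finset.mem_Icc.mpr ⟨by omega, hn'.2⟩)
        rw [hfun]
        exact hV
  obtain ⟨V, hV⟩ := key (P - N) N le_rfl hNP.le le_rfl
  exact ⟨V, hV⟩
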